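/- arXiv:2506.02985 — 8 statements merged into one kernel-verified Lean document; each statement's English description precedes it below -/
import Mathlib

section
/- The number of inversion sequences of length n that avoid both patterns 102 and 001 and have rank t equals 2^(n-t-2), for all integers n ≥ 2 and 0 ≤ t ≤ n-2. -/
/-!
Avoiding `001` forces the run up to the first descent `p` to be a staircase
`0, 1, …, m + 1, …, m + 1` topped by `e p = m + 1`: a repeated value below the top, followed by
`e p`, would be a `001`. Hence every value `v ≤ m` occurs at position `v + 1 < p`, so an ascent
`e j < e k` after `p` would give the `001` at positions `e j + 1, j, k`; the tail after `p` is
therefore weakly decreasing with values at most `m`, and conversely every staircase followed by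
such a tail avoids both patterns. Rank `t` means `p = m + t + 2`, so the tail has length
`L = n - t - 2 - m` and there are `C(m + L, L) = C(n - t - 2, m)` tails; summing over `m` gives
`2 ^ (n - t - 2)`.
-/

/-- An inversion sequence of length `n`, 1-indexed: `0 ≤ e i ≤ i - 1` for `1 ≤ i ≤ n`,
normalized to be `0` outside `[1, n]`. -/
def IsInvSeq (n : ℕ) (e : ℕ → ℕ) : Prop :=
  e 0 = 0 ∧ (∀ i, 1 ≤ i → i ≤ n → e i < i) ∧ ∀ i, n < i → e i = 0

/-- `e` contains a length-3 pattern described by the relation `P` on values. -/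
def Contains (n : ℕ) (P : ℕ → ℕ → ℕ → Prop) (e : ℕ → ℕ) : Prop :=
  ∃ i j k, 1 ≤ i ∧ i < j ∧ j < k ∧ k ≤ n ∧ P (e i) (e j) (e k)

def Pat102 (a b c : ℕ) : Prop := b < a ∧ a < c
def Pat001 (a b c : ℕ) : Prop := a = b ∧ b < c
def Pat011 (a b c : ℕ) : Prop := a < b ∧ b = c
def Pat012 (a b c : ℕ) : Prop := a < b ∧ b < c
def Pat021 (a b c : ℕ) : Prop := a < c ∧ c < b
def Pat110 (a b c : ℕ) : Prop := a = b ∧ c < b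
def Pat120 (a b c : ℕ) : Prop := c < a ∧ a < b
def Pat201 (a b c : ℕ) : Prop := b < c ∧ c < a
def Pat210 (a b c : ℕ) : Prop := c < b ∧ b < a
def Pat101 (a b c : ℕ) : Prop := a = c ∧ b < a

/-- `p` is the position of the first descent of `e` (with convention `e (n+1) = -1`,
i.e. there is always a descent at position `n`). -/
def PrMax (n : ℕ) (e : ℕ → ℕ) (p : ℕ) : Prop :=
  1 ≤ p ∧ p ≤ n ∧ (∀ i, 1 ≤ i → i < p → e i ≤ e (i + 1)) ∧ (p = n ∨ e (p + 1) < e p)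

/-- `e` has rank `t`, i.e. `t = prmax e - max e - 1`. -/
def HasRank (n : ℕ) (e : ℕ → ℕ) (t : ℕ) : Prop :=
  ∃ p, PrMax n e p ∧ p = e p + t + 1

/-- `m` is the maximum value of `e` on `[1, n]`. -/
def IsMaxVal (n : ℕ) (e : ℕ → ℕ) (m : ℕ) : Prop :=
  (∀ i, 1 ≤ i → i ≤ n → e i ≤ m) ∧ ∃ i, 1 ≤ i ∧ i ≤ n ∧ e i = m

/-- Weakly decreasing sequences of length `L` with values at most `m`, padded with zeros. -/
def antitoneSeqs (m L : ℕ) : Set (ℕ → ℕ) :=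
  {f | Antitone f ∧ f 0 ≤ m ∧ f L = 0}

def seqCons (a : ℕ) (g : ℕ → ℕ) : ℕ → ℕ
  | 0 => a
  | i + 1 => g i

lemma seqCons_injective (a : ℕ) : Function.Injective (seqCons a) :=
  fun _ _ h => funext fun i => congrFun h (i + 1)

section antitoneSeqs

variable {m L : ℕ} {f : ℕ → ℕ}

lemma le_of_mem_antitoneSeqs (hf : f ∈ antitoneSeqs m L) (i : ℕ) : f i ≤ m :=
  (hf.1 (Nat.zero_le i)).trans hf.2.1

lemma eq_zero_of_mem_antitoneSeqs (hf : f ∈ antitoneSeqs m L) {i : ℕ} (hi : L ≤ i) :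
    f i = 0 :=
  Nat.eq_zero_of_le_zero (hf.2.2 ▸ hf.1 hi)

lemma antitoneSeqs_eq_singleton_zero (h : m = 0 ∨ L = 0) : antitoneSeqs m L = {0} := by
  ext f
  refine ⟨fun hf => funext fun i =>
    eq_zero_of_mem_antitoneSeqs ⟨hf.1, hf.2.1, ?_⟩ (Nat.zero_le i), fun hf => ?_⟩
  · rcases h with rfl | rfl
    · exact Nat.eq_zero_of_le_zero (le_of_mem_antitoneSeqs hf 0)
    · exact hf.2.2
  · rw [hf]
    exact ⟨antitone_const, Nat.zero_le m, rfl⟩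

end antitoneSeqs

lemma antitoneSeqs_succ_succ (m L : ℕ) :
    antitoneSeqs (m + 1) (L + 1) =
      seqCons (m + 1) '' antitoneSeqs (m + 1) L ∪ antitoneSeqs m (L + 1) := by
  ext f
  constructor
  · intro hf
    rcases Nat.lt_or_ge m (f 0) with hf0 | hf0
    · have htail : (fun i => f (i + 1)) ∈ antitoneSeqs (m + 1) L :=
        ⟨fun _ _ hij => hf.1 (Nat.succ_le_succ hij), (hf.1 (Nat.zero_le 1)).trans hf.2.1,
          hf.2.2⟩
      refine Or.inl ⟨_, htail, ?_⟩
      funext i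
      cases i with
      | zero => exact (le_antisymm hf.2.1 hf0).symm
      | succ i => rfl
    · exact Or.inr ⟨hf.1, hf0, hf.2.2⟩
  · rintro (⟨g, hg, rfl⟩ | hf)
    · refine ⟨antitone_nat_of_succ_le fun i => ?_, le_rfl, hg.2.2⟩
      cases i with
      | zero => exact hg.2.1
      | succ i => exact hg.1 (Nat.le_succ i)
    · exact ⟨hf.1, hf.2.1.trans (Nat.le_succ m), hf.2.2⟩

lemma disjoint_seqCons_image_antitoneSeqs (m L L' : ℕ) :
    Disjoint (seqCons (m + 1) '' antitoneSeqs (m + 1) L) (antitoneSeqs m L') := by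
  rw [Set.disjoint_left]
  rintro _ ⟨g, -, rfl⟩ hg
  exact absurd hg.2.1 (Nat.not_succ_le_self m)

lemma encard_antitoneSeqs (m L : ℕ) : (antitoneSeqs m L).encard = (m + L).choose L := by
  induction m generalizing L with
  | zero => simp [antitoneSeqs_eq_singleton_zero (Or.inl rfl)]
  | succ m ihm =>
    induction L with
    | zero => simp [antitoneSeqs_eq_singleton_zero (Or.inr rfl)]
    | succ L ihL =>
      rw [antitoneSeqs_succ_succ, Set.encard_union_eq (disjoint_seqCons_image_antitoneSeqs m L _),
        (seqCons_injective _).encard_image, ihL, ihm, ← Nat.cast_add,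
        show m + (L + 1) = m + 1 + L by omega, ← Nat.choose_succ_succ']
      rfl

def stairSeq (p m : ℕ) (f : ℕ → ℕ) (i : ℕ) : ℕ :=
  if i ≤ p then min (i - 1) m else f (i - p - 1)

section stairSeq

variable {p m : ℕ} {f : ℕ → ℕ}

lemma stairSeq_of_le {i : ℕ} (hi : i ≤ p) : stairSeq p m f i = min (i - 1) m :=
  if_pos hi

lemma stairSeq_of_lt {i : ℕ} (hi : p < i) : stairSeq p m f i = f (i - p - 1) :=
  if_neg hi.not_ge

lemma stairSeq_add_one_add (i : ℕ) : stairSeq p m f (p + 1 + i) = f i := by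
  rw [stairSeq_of_lt (by omega)]
  congr 1
  omega

lemma stairSeq_injective (p m : ℕ) : Function.Injective (stairSeq p m) :=
  fun _ _ h => funext fun i => by simpa only [stairSeq_add_one_add] using congrFun h (p + 1 + i)

lemma stairSeq_le (hf : ∀ j, f j ≤ m) (i : ℕ) : stairSeq p m f i ≤ m := by
  unfold stairSeq
  split_ifs
  exacts [min_le_right _ _, hf _]

lemma stairSeq_add_one_self (hmp : m < p) : stairSeq p m f (m + 1) = m := by
  rw [stairSeq_of_le hmp]
  omega

lemma stairSeq_monotoneOn : MonotoneOn (stairSeq p m f) (Set.Iic p) := by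
  intro i hi j hj hij
  rw [stairSeq_of_le hi, stairSeq_of_le hj]
  omega

lemma stairSeq_antitoneOn (hf : Antitone f) : AntitoneOn (stairSeq p m f) (Set.Ioi p) := by
  intro i hi j hj hij
  rw [stairSeq_of_lt hi, stairSeq_of_lt hj]
  exact hf (by omega)

lemma isInvSeq_stairSeq {n L : ℕ} (hf : f ∈ antitoneSeqs m L) (hmp : m ≤ p) (hn : p + L = n) :
    IsInvSeq n (stairSeq p (m + 1) f) := by
  refine ⟨stairSeq_of_le (Nat.zero_le p), fun i hi _ => ?_, fun i hi => ?_⟩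
  · by_cases hip : i ≤ p
    · rw [stairSeq_of_le hip]
      omega
    · rw [stairSeq_of_lt (by omega)]
      have := le_of_mem_antitoneSeqs hf (i - p - 1)
      omega
  · rw [stairSeq_of_lt (by omega)]
    exact eq_zero_of_mem_antitoneSeqs hf (by omega)

lemma not_contains_pat001_stairSeq {n : ℕ} (hf : Antitone f) (hf0 : f 0 ≤ m) :
    ¬ Contains n Pat001 (stairSeq p m f) := by
  rintro ⟨i, j, k, hi, hij, hjk, -, heq, hlt⟩
  have hk : stairSeq p m f k ≤ m := stairSeq_le (fun l => (hf (Nat.zero_le l)).trans hf0) k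
  by_cases hjp : j ≤ p
  -- a value repeated inside the staircase is its top value `m`
  · rw [stairSeq_of_le (hij.le.trans hjp), stairSeq_of_le hjp] at heq
    rw [stairSeq_of_le hjp] at hlt
    omega
  · exact absurd (stairSeq_antitoneOn hf (Set.mem_Ioi.2 (by omega)) (Set.mem_Ioi.2 (by omega))
      hjk.le) hlt.not_ge

lemma hasRank_stairSeq {n t : ℕ} (hf0 : f 0 ≤ m) (hn : m + t + 2 ≤ n) :
    HasRank n (stairSeq (m + t + 2) (m + 1) f) t := by
  have htop : stairSeq (m + t + 2) (m + 1) f (m + t + 2) = m + 1 := by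
    rw [stairSeq_of_le le_rfl]
    omega
  refine ⟨m + t + 2, ⟨by omega, hn, fun i _ hi => stairSeq_monotoneOn (Set.mem_Iic.2 hi.le)
    (Set.mem_Iic.2 hi) (Nat.le_succ i), Or.inr ?_⟩, by rw [htop]; omega⟩
  rw [htop, stairSeq_add_one_add 0]
  omega

end stairSeq

lemma not_contains_pat102_of_monotoneOn_of_antitoneOn {n p : ℕ} {e : ℕ → ℕ}
    (hmono : MonotoneOn e (Set.Icc 1 p)) (hanti : AntitoneOn e (Set.Ioi p)) :
    ¬ Contains n Pat102 e := by
  rintro ⟨i, j, k, hi, hij, hjk, -, hji, hik⟩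
  by_cases hjp : j ≤ p
  · exact absurd (hmono ⟨hi, hij.le.trans hjp⟩ ⟨hi.trans hij.le, hjp⟩ hij.le) hji.not_ge
  · exact absurd (hanti (Set.mem_Ioi.2 (by omega)) (Set.mem_Ioi.2 (by omega)) hjk.le)
      (hji.trans hik).not_ge

namespace PrMax

variable {n p : ℕ} {e : ℕ → ℕ}

lemma monotoneOn (hp : PrMax n e p) : MonotoneOn e (Set.Icc 1 p) :=
  monotoneOn_of_le_add_one Set.ordConnected_Icc fun i _ hi hi1 => hp.2.2.1 i hi.1 hi1.2

lemma apply_lt (hinv : IsInvSeq n e) (hp : PrMax n e p) : e p < p :=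
  hinv.2.1 p hp.1 hp.2.1

lemma eq_min (hinv : IsInvSeq n e) (h001 : ¬ Contains n Pat001 e) (hp : PrMax n e p) :
    ∀ i, 1 ≤ i → i ≤ p → e i = min (i - 1) (e p) := by
  intro i hi
  induction i, hi using Nat.le_induction with
  | base =>
    intro hp1
    have := hinv.2.1 1 le_rfl (hp1.trans hp.2.1)
    omega
  | succ i hi ih =>
    intro hip
    have ih := ih (by omega)
    have hstep : e i ≤ e (i + 1) := hp.2.2.1 i hi (by omega)
    have htop : e (i + 1) ≤ e p := hp.monotoneOn ⟨by omega, hip⟩ ⟨by omega, le_rfl⟩ hip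
    have hlt : e (i + 1) < i + 1 := hinv.2.1 _ (by omega) (hip.trans hp.2.1)
    have hne : e i < e p → e i ≠ e (i + 1) := by
      intro hip' heq
      rcases hip.lt_or_eq with hip | rfl
      · exact h001 ⟨i, i + 1, p, hi, by omega, hip, hp.2.1, heq, by omega⟩
      · exact hip'.ne heq
    omega

lemma apply_add_one_of_lt (hinv : IsInvSeq n e) (h001 : ¬ Contains n Pat001 e)
    (hp : PrMax n e p) {v : ℕ} (hv : v < e p) : e (v + 1) = v := by
  have := hp.eq_min hinv h001 (v + 1) (by omega) (by have := hp.apply_lt hinv; omega)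
  omega

lemma apply_le_apply_of_lt_top (hinv : IsInvSeq n e) (h001 : ¬ Contains n Pat001 e)
    (hp : PrMax n e p) {j k : ℕ} (hpj : p < j) (hjk : j < k) (hkn : k ≤ n) (hj : e j < e p) :
    e k ≤ e j := by
  by_contra! hk
  have := hp.apply_lt hinv
  exact h001 ⟨e j + 1, j, k, by omega, by omega, hjk, hkn,
    hp.apply_add_one_of_lt hinv h001 hj, hk⟩

lemma apply_lt_top (hinv : IsInvSeq n e) (h001 : ¬ Contains n Pat001 e) (hp : PrMax n e p)
    {k : ℕ} (hpk : p < k) (hkn : k ≤ n) : e k < e p := by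
  have hdesc : e (p + 1) < e p := hp.2.2.2.resolve_left (by omega)
  rcases (Nat.succ_le_of_lt hpk).eq_or_lt with rfl | hk
  · exact hdesc
  · exact (hp.apply_le_apply_of_lt_top hinv h001 (Nat.lt_succ_self p) hk hkn hdesc).trans_lt hdesc

lemma antitone_tail (hinv : IsInvSeq n e) (h001 : ¬ Contains n Pat001 e) (hp : PrMax n e p) :
    Antitone fun i => e (p + 1 + i) := by
  refine antitone_nat_of_succ_le fun i => ?_
  by_cases hi : p + 1 + (i + 1) ≤ n
  · exact hp.apply_le_apply_of_lt_top hinv h001 (by omega) (by omega) hi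
      (hp.apply_lt_top hinv h001 (by omega) (by omega))
  · simp only [hinv.2.2 (p + 1 + (i + 1)) (by omega), Nat.zero_le]

lemma eq_stairSeq (hinv : IsInvSeq n e) (h001 : ¬ Contains n Pat001 e) (hp : PrMax n e p) :
    e = stairSeq p (e p) fun i => e (p + 1 + i) := by
  funext i
  by_cases hip : i ≤ p
  · rw [stairSeq_of_le hip]
    rcases Nat.eq_zero_or_pos i with rfl | hi
    · exact hinv.1
    · exact hp.eq_min hinv h001 i hi hip
  · rw [stairSeq_of_lt (by omega)]
    congr 1
    omega

end PrMax

lemma exists_stairSeq_of_hasRank {n t : ℕ} {e : ℕ → ℕ} (hn : 2 ≤ n) (ht : t ≤ n - 2)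
    (hinv : IsInvSeq n e) (h001 : ¬ Contains n Pat001 e) (hrank : HasRank n e t) :
    ∃ m < n - t - 2 + 1, ∃ f ∈ antitoneSeqs m (n - t - 2 - m),
      e = stairSeq (m + t + 2) (m + 1) f := by
  obtain ⟨p, hp, hpt⟩ := hrank
  have hpn := hp.2.1
  have htop : 1 ≤ e p := by
    by_contra! h0
    have hdesc : e (p + 1) < e p := hp.2.2.2.resolve_left (by omega)
    omega
  refine ⟨e p - 1, by omega, fun i => e (p + 1 + i),
    ⟨hp.antitone_tail hinv h001, ?_, ?_⟩, ?_⟩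
  · show e (p + 1 + 0) ≤ e p - 1
    rcases hpn.lt_or_eq with hpn | rfl
    · have := hp.apply_lt_top hinv h001 (k := p + 1 + 0) (by omega) (by omega)
      omega
    · simp only [hinv.2.2 (p + 1 + 0) (by omega), Nat.zero_le]
  · exact hinv.2.2 _ (by omega)
  · rw [show e p - 1 + t + 2 = p by omega, Nat.sub_add_cancel htop]
    exact hp.eq_stairSeq hinv h001

lemma setOf_avoiding_hasRank_eq_biUnion {n t : ℕ} (hn : 2 ≤ n) (ht : t ≤ n - 2) :
    {e : ℕ → ℕ | IsInvSeq n e ∧ ¬ Contains n Pat102 e ∧ ¬ Contains n Pat001 e ∧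
      HasRank n e t} =
      ⋃ m ∈ (Finset.range (n - t - 2 + 1) : Set ℕ),
        stairSeq (m + t + 2) (m + 1) '' antitoneSeqs m (n - t - 2 - m) := by
  ext e
  simp only [Set.mem_ofPred_eq, Set.mem_iUnion, Finset.coe_range, Set.mem_Iio, Set.mem_image,
    exists_prop]
  constructor
  · rintro ⟨hinv, -, h001, hrank⟩
    obtain ⟨m, hm, f, hf, rfl⟩ := exists_stairSeq_of_hasRank hn ht hinv h001 hrank
    exact ⟨m, hm, f, hf, rfl⟩
  · rintro ⟨m, hm, f, hf, rfl⟩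
    exact ⟨isInvSeq_stairSeq hf (by omega) (by omega),
      not_contains_pat102_of_monotoneOn_of_antitoneOn
        (stairSeq_monotoneOn.mono Set.Icc_subset_Iic_self) (stairSeq_antitoneOn hf.1),
      not_contains_pat001_stairSeq hf.1 (hf.2.1.trans m.le_succ),
      hasRank_stairSeq hf.2.1 (by omega)⟩

lemma ncard_biUnion_stairSeq (N t : ℕ) :
    (⋃ m ∈ (Finset.range (N + 1) : Set ℕ),
      stairSeq (m + t + 2) (m + 1) '' antitoneSeqs m (N - m)).ncard = 2 ^ N := by
  have hdisj : (Finset.range (N + 1) : Set ℕ).PairwiseDisjoint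
      fun m => stairSeq (m + t + 2) (m + 1) '' antitoneSeqs m (N - m) := by
    intro m _ m' _ hne
    refine Set.disjoint_left.2 ?_
    rintro _ ⟨f, hf, rfl⟩ ⟨f', hf', heq⟩
    -- the height of a staircase is its maximum value
    have h := stairSeq_le (p := m' + t + 2)
      (fun j => (le_of_mem_antitoneSeqs hf' j).trans m'.le_succ) (m + 1 + 1)
    have h' := stairSeq_le (p := m + t + 2)
      (fun j => (le_of_mem_antitoneSeqs hf j).trans m.le_succ) (m' + 1 + 1)
    rw [heq, stairSeq_add_one_self (by omega)] at h
    rw [← heq, stairSeq_add_one_self (by omega)] at h'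
    exact hne (by omega)
  rw [Set.ncard_def, (Finset.range (N + 1)).finite_toSet.encard_biUnion hdisj,
    finsum_mem_coe_finset]
  simp only [(stairSeq_injective _ _).encard_image, encard_antitoneSeqs]
  rw [← Nat.cast_sum, ENat.toNat_natCast, ← Nat.sum_range_choose]
  refine Finset.sum_congr rfl fun m hm => ?_
  have hmN : m ≤ N := Finset.mem_range_succ_iff.1 hm
  rw [Nat.add_sub_cancel' hmN, Nat.choose_symm hmN]

theorem stmt0 (n t : ℕ) (hn : 2 ≤ n) (ht : t ≤ n - 2) :
    {e : ℕ → ℕ | IsInvSeq n e ∧ ¬ Contains n Pat102 e ∧ ¬ Contains n Pat001 e ∧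
      HasRank n e t}.ncard = 2 ^ (n - t - 2) := by
  rw [setOf_avoiding_hasRank_eq_biUnion hn ht, ncard_biUnion_stairSeq]
end

section
/- A 001-avoiding inversion sequence of length n automatically avoids 102; equivalently, e avoids both 102 and 001 if and only if there exists an index k such that e_1 < e_2 < ... < e_k ≥ e_{k+1} ≥ ... ≥ e_n. -/
def IsUnimodalAt (n : ℕ) (e : ℕ → ℕ) (k : ℕ) : Prop :=
  1 ≤ k ∧ k ≤ n ∧ (∀ i, 1 ≤ i → i < k → e i < e (i + 1)) ∧
    (∀ i, k ≤ i → i < n → e (i + 1) ≤ e i)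

lemma strictMonoOn_Icc_of_lt_add_one {e : ℕ → ℕ} {k : ℕ}
    (h : ∀ i, 1 ≤ i → i < k → e i < e (i + 1)) : StrictMonoOn e (Set.Icc 1 k) :=
  strictMonoOn_of_lt_add_one Set.ordConnected_Icc fun i _ hi hi' => h i hi.1 (by grind)

lemma antitoneOn_Icc_of_add_one_le {e : ℕ → ℕ} {k n : ℕ}
    (h : ∀ i, k ≤ i → i < n → e (i + 1) ≤ e i) : AntitoneOn e (Set.Icc k n) :=
  antitoneOn_of_add_one_le Set.ordConnected_Icc fun i _ hi hi' => h i hi.1 (by grind)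

namespace IsUnimodalAt

variable {n k : ℕ} {e : ℕ → ℕ}

lemma not_valley {i j l : ℕ} (hk : IsUnimodalAt n e k) (hi : 1 ≤ i) (hij : i < j) (hjl : j < l)
    (hl : l ≤ n) : ¬ (e j ≤ e i ∧ e j < e l) := by
  obtain ⟨-, -, hinc, hdec⟩ := hk
  rintro ⟨hji, hjl'⟩
  rcases le_or_gt j k with hjk | hkj
  · have := strictMonoOn_Icc_of_lt_add_one hinc ⟨hi, by omega⟩ ⟨by omega, hjk⟩ hij
    omega
  · have := antitoneOn_Icc_of_add_one_le hdec ⟨hkj.le, by omega⟩ ⟨by omega, hl⟩ hjl.le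
    omega

lemma not_contains_pat102 (hk : IsUnimodalAt n e k) : ¬ Contains n Pat102 e := by
  rintro ⟨i, j, l, hi, hij, hjl, hl, hji, hil⟩
  exact hk.not_valley hi hij hjl hl ⟨hji.le, hji.trans hil⟩

lemma not_contains_pat001 (hk : IsUnimodalAt n e k) : ¬ Contains n Pat001 e := by
  rintro ⟨i, j, l, hi, hij, hjl, hl, hij', hjl'⟩
  exact hk.not_valley hi hij hjl hl ⟨hij'.ge, hjl'⟩

end IsUnimodalAt

lemma le_of_not_contains_pat001 {n : ℕ} {e : ℕ → ℕ} (h : ¬ Contains n Pat001 e) {p i j : ℕ}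
    (hp : 1 ≤ p) (hpi : p < i) (hij : i < j) (hj : j ≤ n) (hep : e p = e i) : e j ≤ e i :=
  not_lt.1 fun hlt => h ⟨p, i, j, hp, hpi, hij, hj, hep, hlt⟩

namespace IsInvSeq

variable {n : ℕ} {e : ℕ → ℕ}

lemma apply_add_one_eq_of_lt_add_one (he : IsInvSeq n e) {k : ℕ} (hkn : k ≤ n)
    (hinc : ∀ i, 1 ≤ i → i < k → e i < e (i + 1)) (m : ℕ) (hm : 1 ≤ m) (hmk : m ≤ k) :
    e m + 1 = m := by
  induction m, hm using Nat.le_induction with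
  | base => have := he.2.1 1 le_rfl (by omega); omega
  | succ m hm ih =>
    have h₁ := ih (by omega)
    have h₂ := hinc m hm (by omega)
    have h₃ := he.2.1 (m + 1) (by omega) (by omega)
    omega

lemma exists_isUnimodalAt_of_not_contains_pat001 (he : IsInvSeq n e) (hn : 1 ≤ n)
    (h001 : ¬ Contains n Pat001 e) : ∃ k, IsUnimodalAt n e k := by
  classical
  have hex : ∃ p, 1 ≤ p ∧ (p = n ∨ e (p + 1) ≤ e p) := ⟨n, hn, Or.inl rfl⟩
  obtain ⟨hk, hdesc⟩ := Nat.find_spec hex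
  set k := Nat.find hex
  have hkn : k ≤ n := Nat.find_le ⟨hn, Or.inl rfl⟩
  have hinc : ∀ i, 1 ≤ i → i < k → e i < e (i + 1) := fun i hi hik => by
    have := Nat.find_min hex hik
    grind
  have hval := he.apply_add_one_eq_of_lt_add_one hkn hinc
  refine ⟨k, hk, hkn, hinc, fun i hki hin => ?_⟩
  induction i using Nat.strong_induction_on with
  | _ i ih =>
    have hik : e i ≤ e k :=
      antitoneOn_Icc_of_add_one_le (fun m hkm hmi => ih m hmi hkm (by omega))
        ⟨le_rfl, hki⟩ ⟨hki, le_rfl⟩ hki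
    have hek := hval k hk le_rfl
    rcases (show e i + 1 < i ∨ i = k by omega) with hlt | rfl
    · exact le_of_not_contains_pat001 h001 (by omega) hlt (by omega) (by omega)
        (by have := hval (e i + 1) (by omega) (by omega); omega)
    · exact hdesc.resolve_left (by omega)

end IsInvSeq

theorem stmt1 (n : ℕ) (hn : 1 ≤ n) (e : ℕ → ℕ) (he : IsInvSeq n e) :
    (¬ Contains n Pat001 e → ¬ Contains n Pat102 e) ∧
    ((¬ Contains n Pat102 e ∧ ¬ Contains n Pat001 e) ↔
      ∃ k, 1 ≤ k ∧ k ≤ n ∧ (∀ i, 1 ≤ i → i < k → e i < e (i + 1)) ∧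
        (∀ i, k ≤ i → i < n → e (i + 1) ≤ e i)) := by
  have unimodal := he.exists_isUnimodalAt_of_not_contains_pat001 hn
  refine ⟨fun h001 => ?_, fun h => unimodal h.2, fun ⟨k, (hk : IsUnimodalAt n e k)⟩ => ?_⟩
  · obtain ⟨k, hk⟩ := unimodal h001
    exact hk.not_contains_pat102
  · exact ⟨hk.not_contains_pat102, hk.not_contains_pat001⟩
end

section
/- For positive integers n and t with t ≤ n-1, the number of inversion sequences of length n+1 avoiding 102 and 011 with rank t equals the number of inversion sequences of length n avoiding 102 and 011 with rank t-1. -/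
/-!
Deleting the leading entry `e₁ = 0` is a bijection between the two sets. Its inverse prepends a
`0`, which creates no `102` (nothing is below `0`) and no `011` (a `011` starting at the new `0`
is realised by the old leading `0` as well). Deleting `e₁` shortens the first ascending run by one
while keeping the maximum, so the rank drops by one. The only issue is that the shifted sequence
must still be an inversion sequence, i.e. `e_j < j - 1` for `j ≥ 2`: a position with `e_j = j - 1`
before the first descent `p` would, by `011`-avoidance, force the run to increase strictly up to
`e_p ≥ p - 1`, i.e. rank `0`; after `p` it would complete a `102` with the descent.
-/

def dropFirst (e : ℕ → ℕ) : ℕ → ℕ := fun i => e (i + 1)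

/-- Prepends a `0` to an inversion sequence `f`: the value at position `1` is `f 0 = 0`. -/
def consZero (f : ℕ → ℕ) : ℕ → ℕ := fun i => f (i - 1)

def avoiders102011OfRank (n t : ℕ) : Set (ℕ → ℕ) :=
  {e | IsInvSeq n e ∧ ¬ Contains n Pat102 e ∧ ¬ Contains n Pat011 e ∧ HasRank n e t}

@[simp] lemma dropFirst_apply (e : ℕ → ℕ) (i : ℕ) : dropFirst e i = e (i + 1) := rfl

@[simp] lemma consZero_apply_succ (f : ℕ → ℕ) (i : ℕ) : consZero f (i + 1) = f i := rfl

lemma dropFirst_consZero (f : ℕ → ℕ) : dropFirst (consZero f) = f := rfl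

lemma consZero_dropFirst {e : ℕ → ℕ} (h : e 0 = e 1) : consZero (dropFirst e) = e := by
  funext i
  cases i with
  | zero => exact h.symm
  | succ i => rfl

lemma IsInvSeq.apply_one {n : ℕ} {e : ℕ → ℕ} (h : IsInvSeq n e) : e 1 = 0 := by
  rcases Nat.eq_zero_or_pos n with rfl | hn
  · exact h.2.2 1 one_pos
  · have := h.2.1 1 le_rfl hn
    omega

lemma IsInvSeq.dropFirst {n : ℕ} {e : ℕ → ℕ} (h : IsInvSeq (n + 1) e)
    (hlt : ∀ j, 2 ≤ j → j ≤ n + 1 → e j + 1 < j) : IsInvSeq n (dropFirst e) :=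
  ⟨h.apply_one, fun i hi hin => by
    have := hlt (i + 1) (by omega) (by omega)
    show e (i + 1) < i
    omega,
    fun i hi => h.2.2 (i + 1) (by omega)⟩

lemma IsInvSeq.consZero {n : ℕ} {f : ℕ → ℕ} (h : IsInvSeq n f) :
    IsInvSeq (n + 1) (consZero f) := by
  refine ⟨h.1, fun i hi hin => ?_, fun i hi => h.2.2 (i - 1) (by omega)⟩
  obtain ⟨i, rfl⟩ : ∃ k, i = k + 1 := ⟨i - 1, by omega⟩
  rcases Nat.eq_zero_or_pos i with rfl | hi'
  · simp [h.1]
  · have := h.2.1 i hi' (by omega)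
    simp only [consZero_apply_succ]
    omega

lemma Contains.of_dropFirst {n : ℕ} {P : ℕ → ℕ → ℕ → Prop} {e : ℕ → ℕ}
    (h : Contains n P (dropFirst e)) : Contains (n + 1) P e := by
  obtain ⟨i, j, k, hi, hij, hjk, hk, hP⟩ := h
  exact ⟨i + 1, j + 1, k + 1, by omega, by omega, by omega, by omega, hP⟩

/-- An occurrence through the new leading `0` can use the old leading `0` instead, unless it also
uses the old one. -/
lemma Contains.of_consZero {n : ℕ} {P : ℕ → ℕ → ℕ → Prop} {f : ℕ → ℕ} (hf : f 0 = 0)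
    (hf1 : f 1 = 0) (h : Contains (n + 1) P (consZero f)) : Contains n P f ∨ ∃ c, P 0 0 c := by
  obtain ⟨i, j, k, hi, hij, hjk, hk, hP⟩ := h
  obtain ⟨i, rfl⟩ : ∃ a, i = a + 1 := ⟨i - 1, by omega⟩
  obtain ⟨j, rfl⟩ : ∃ b, j = b + 1 := ⟨j - 1, by omega⟩
  obtain ⟨k, rfl⟩ : ∃ c, k = c + 1 := ⟨k - 1, by omega⟩
  simp only [consZero_apply_succ] at hP
  rcases Nat.eq_zero_or_pos i with rfl | hi'
  · rcases Nat.lt_or_ge j 2 with hj | hj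
    · obtain rfl : j = 1 := by omega
      exact Or.inr ⟨f k, by rwa [hf, hf1] at hP⟩
    · exact Or.inl ⟨1, j, k, le_rfl, by omega, by omega, by omega, by rwa [hf1, ← hf]⟩
  · exact Or.inl ⟨i, j, k, hi', by omega, by omega, by omega, hP⟩

lemma HasRank.dropFirst {n t : ℕ} {e : ℕ → ℕ} (h : HasRank (n + 1) e t) (ht : 1 ≤ t) :
    HasRank n (dropFirst e) (t - 1) := by
  obtain ⟨p, ⟨hp1, hpn, hmono, hdesc⟩, hpt⟩ := h
  obtain ⟨p, rfl⟩ : ∃ q, p = q + 1 := ⟨p - 1, by omega⟩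
  refine ⟨p, ⟨by omega, by omega, fun i hi hip => hmono (i + 1) (by omega) (by omega), ?_⟩, ?_⟩
  · rcases hdesc with h | h
    · exact Or.inl (by omega)
    · exact Or.inr h
  · simp only [dropFirst_apply]
    omega

lemma HasRank.consZero {n s : ℕ} {f : ℕ → ℕ} (hf : f 0 = 0) (h : HasRank n f s) :
    HasRank (n + 1) (consZero f) (s + 1) := by
  obtain ⟨p, ⟨hp1, hpn, hmono, hdesc⟩, hpt⟩ := h
  refine ⟨p + 1, ⟨by omega, by omega, fun i hi hip => ?_, ?_⟩, ?_⟩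
  · obtain ⟨i, rfl⟩ : ∃ k, i = k + 1 := ⟨i - 1, by omega⟩
    simp only [consZero_apply_succ]
    rcases Nat.eq_zero_or_pos i with rfl | hi'
    · simp [hf]
    · exact hmono i hi' (by omega)
  · rcases hdesc with h | h
    · exact Or.inl (by omega)
    · exact Or.inr h
  · simp only [consZero_apply_succ]
    omega

/-- On the first ascending run, an equality `e m = e (m + 1)` above `e 1` would be a `011`. -/
lemma add_sub_le_of_not_contains011 {N p j : ℕ} {e : ℕ → ℕ} (h011 : ¬ Contains N Pat011 e)
    (hmono : ∀ i, 1 ≤ i → i < p → e i ≤ e (i + 1)) (hpN : p ≤ N) (hj : 1 < j)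
    (hej : e 1 < e j) : ∀ m, j ≤ m → m ≤ p → e j + (m - j) ≤ e m := by
  intro m hjm hmp
  induction m, hjm using Nat.le_induction with
  | base => simp
  | succ m hjm ih =>
    have hstep := hmono m (by omega) (by omega)
    have hm := ih (by omega)
    have hne : e m ≠ e (m + 1) := fun heq =>
      h011 ⟨1, m, m + 1, le_rfl, by omega, by omega, by omega, by omega, heq⟩
    omega

lemma apply_add_one_lt_of_hasRank_pos {N t : ℕ} {e : ℕ → ℕ} (h : IsInvSeq N e)
    (h102 : ¬ Contains N Pat102 e) (h011 : ¬ Contains N Pat011 e) (hrank : HasRank N e t)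
    (ht : 1 ≤ t) : ∀ j, 2 ≤ j → j ≤ N → e j + 1 < j := by
  intro j hj hjN
  obtain ⟨p, ⟨hp1, hpN, hmono, hdesc⟩, hpt⟩ := hrank
  have hjlt := h.2.1 j (by omega) hjN
  have hplt := h.2.1 p hp1 hpN
  by_contra hcon
  rcases le_or_gt j p with hjp | hpj
  · have := add_sub_le_of_not_contains011 h011 hmono hpN (by omega) (by rw [h.apply_one]; omega)
      p hjp le_rfl
    omega
  · have hdesc : e (p + 1) < e p := hdesc.resolve_left (by omega)
    rcases Nat.lt_or_ge (p + 1) j with hlt | hle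
    · exact h102 ⟨p, p + 1, j, hp1, by omega, hlt, hjN, hdesc, by omega⟩
    · obtain rfl : j = p + 1 := by omega
      omega

lemma mapsTo_dropFirst {n t : ℕ} (ht : 1 ≤ t) :
    Set.MapsTo dropFirst (avoiders102011OfRank (n + 1) t) (avoiders102011OfRank n (t - 1)) := by
  rintro e ⟨hinv, h102, h011, hrank⟩
  exact ⟨hinv.dropFirst (apply_add_one_lt_of_hasRank_pos hinv h102 h011 hrank ht),
    fun h => h102 h.of_dropFirst, fun h => h011 h.of_dropFirst, hrank.dropFirst ht⟩

lemma mapsTo_consZero (n s : ℕ) :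
    Set.MapsTo consZero (avoiders102011OfRank n s) (avoiders102011OfRank (n + 1) (s + 1)) := by
  rintro f ⟨hinv, h102, h011, hrank⟩
  refine ⟨hinv.consZero, fun h => ?_, fun h => ?_, hrank.consZero hinv.1⟩
  · rcases h.of_consZero hinv.1 hinv.apply_one with h | ⟨c, hc⟩
    exacts [h102 h, (Nat.not_lt_zero _ hc.1).elim]
  · rcases h.of_consZero hinv.1 hinv.apply_one with h | ⟨c, hc⟩
    exacts [h011 h, (lt_irrefl 0 hc.1).elim]

theorem stmt2_general (n t : ℕ) (ht1 : 1 ≤ t) :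
    {e : ℕ → ℕ | IsInvSeq (n + 1) e ∧ ¬ Contains (n + 1) Pat102 e ∧
      ¬ Contains (n + 1) Pat011 e ∧ HasRank (n + 1) e t}.ncard =
    {e : ℕ → ℕ | IsInvSeq n e ∧ ¬ Contains n Pat102 e ∧
      ¬ Contains n Pat011 e ∧ HasRank n e (t - 1)}.ncard := by
  have hback := mapsTo_consZero n (t - 1)
  rw [Nat.sub_add_cancel ht1] at hback
  have hinv : Set.InvOn consZero dropFirst (avoiders102011OfRank (n + 1) t)
      (avoiders102011OfRank n (t - 1)) :=
    ⟨fun e he => consZero_dropFirst (by rw [he.1.1, he.1.apply_one]),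
      fun f _ => dropFirst_consZero f⟩
  exact (hinv.bijOn (mapsTo_dropFirst ht1) hback).ncard_eq

theorem stmt2 (n t : ℕ) (hn : 1 ≤ n) (ht1 : 1 ≤ t) (ht2 : t ≤ n - 1) :
    {e : ℕ → ℕ | IsInvSeq (n + 1) e ∧ ¬ Contains (n + 1) Pat102 e ∧
      ¬ Contains (n + 1) Pat011 e ∧ HasRank (n + 1) e t}.ncard =
    {e : ℕ → ℕ | IsInvSeq n e ∧ ¬ Contains n Pat102 e ∧
      ¬ Contains n Pat011 e ∧ HasRank n e (t - 1)}.ncard :=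
  stmt2_general n t ht1
end

section
/- For integers n ≥ 2 and 0 ≤ t ≤ n-2, the number of inversion sequences of length n avoiding both 102 and 011 with rank t equals the Fibonacci number F_{2n-2t-2} (with F_0 = 0, F_1 = 1). -/
/-!
Write `a n` for the number of avoiders of length `n` and `b n t` for those of rank `t`.
Inserting a `0` at position `1` raises length and rank by one, and it is a bijection onto the
avoiders of positive rank: `b (n + 1) (t + 1) = b n t` and `a (n + 1) = b (n + 1) 0 + a n`.

A rank-`0` avoider has its peak `e p = p - 1` at its first descent `p`. Deleting the peak is a
bijection from those with `e (p + 1) < e (p - 1)` (or `p` last) onto all avoiders of length `n`;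
for the others, swapping `e p` and `e (p + 1)` gives exactly the avoiders of rank `1`. Hence
`b (n + 1) 0 = a n + b n 0` for `n ≥ 2`, and from `b 2 0 = a 1 = 1` the two recurrences give
`b n 0 = F (2 n - 2)` and `a n = F (2 n - 1)`.
-/

section FirstDescent

variable {n p q : ℕ} {e : ℕ → ℕ}

lemma PrMax.apply_le_apply (hp : PrMax n e p) {i j : ℕ} (hi : 1 ≤ i) (hij : i ≤ j)
    (hjp : j ≤ p) : e i ≤ e j := by
  induction j, hij using Nat.le_induction with
  | base => exact le_rfl
  | succ j hij ih => exact (ih (by omega)).trans (hp.2.2.1 j (by omega) (by omega))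

lemma PrMax.apply_succ_lt (hp : PrMax n e p) (hpn : p < n) : e (p + 1) < e p :=
  hp.2.2.2.resolve_left (by omega)

lemma PrMax.unique (hp : PrMax n e p) (hq : PrMax n e q) : p = q := by
  by_contra hne
  wlog hpq : p < q generalizing p q
  · exact this hq hp (Ne.symm hne) (by omega)
  have := hq.2.2.1 p hp.1 hpq
  have := hp.apply_succ_lt (by have := hq.2.1; omega)
  omega

lemma HasRank.unique {t s : ℕ} (ht : HasRank n e t) (hs : HasRank n e s) : t = s := by
  obtain ⟨p, hp, hpe⟩ := ht
  obtain ⟨q, hq, hqe⟩ := hs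
  obtain rfl := hp.unique hq
  omega

noncomputable def firstDescent (n : ℕ) (e : ℕ → ℕ) : ℕ :=
  Nat.find (⟨n, Or.inl rfl⟩ : ∃ p, p = n ∨ (1 ≤ p ∧ e (p + 1) < e p))

lemma prMax_firstDescent (hn : 1 ≤ n) (e : ℕ → ℕ) : PrMax n e (firstDescent n e) := by
  have hex : ∃ p, p = n ∨ (1 ≤ p ∧ e (p + 1) < e p) := ⟨n, Or.inl rfl⟩
  have hspec : firstDescent n e = n ∨ (1 ≤ firstDescent n e ∧
      e (firstDescent n e + 1) < e (firstDescent n e)) := Nat.find_spec hex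
  have hle : firstDescent n e ≤ n := Nat.find_min' hex (Or.inl rfl)
  have hmin : ∀ m < firstDescent n e, ¬ (m = n ∨ (1 ≤ m ∧ e (m + 1) < e m)) :=
    fun m hm => Nat.find_min hex hm
  refine ⟨?_, hle, fun i hi hip => ?_, hspec.imp id And.right⟩
  · rcases hspec with h | h <;> omega
  · have := hmin i hip; omega

lemma PrMax.firstDescent_eq (hp : PrMax n e p) : firstDescent n e = p :=
  (prMax_firstDescent (hp.1.trans hp.2.1) e).unique hp

end FirstDescent

namespace InvSeqAvoid

def avoiders (n : ℕ) : Set (ℕ → ℕ) :=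
  {e | IsInvSeq n e ∧ ¬ Contains n Pat102 e ∧ ¬ Contains n Pat011 e}

def rankSet (n t : ℕ) : Set (ℕ → ℕ) := {e | e ∈ avoiders n ∧ HasRank n e t}

section Avoiders

variable {n : ℕ} {e : ℕ → ℕ}

lemma apply_zero_of_mem (he : e ∈ avoiders n) : e 0 = 0 := he.1.1

lemma apply_lt_of_mem (he : e ∈ avoiders n) {i : ℕ} (hi : 1 ≤ i) (hin : i ≤ n) : e i < i :=
  he.1.2.1 i hi hin

lemma apply_eq_zero_of_lt (he : e ∈ avoiders n) {i : ℕ} (hi : n < i) : e i = 0 := he.1.2.2 i hi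

lemma apply_one_of_mem (he : e ∈ avoiders n) : e 1 = 0 := by
  rcases Nat.lt_or_ge n 1 with h | h
  · exact apply_eq_zero_of_lt he h
  · have := apply_lt_of_mem he le_rfl h; omega

/-- Since `e 1 = 0`, two equal positive entries would complete an `011`. -/
lemma eq_zero_of_apply_eq (he : e ∈ avoiders n) {j k : ℕ} (hj : 1 ≤ j) (hjk : j < k)
    (hkn : k ≤ n) (h : e j = e k) : e j = 0 := by
  by_contra hne
  rcases Nat.eq_or_lt_of_le hj with rfl | hj
  · exact hne (apply_one_of_mem he)
  · exact he.2.2 ⟨1, j, k, le_rfl, hj, hjk, hkn, by rw [apply_one_of_mem he]; omega, h⟩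

lemma apply_lt_of_apply_lt (he : e ∈ avoiders n) {i j k : ℕ} (hi : 1 ≤ i) (hij : i < j)
    (hjk : j < k) (hkn : k ≤ n) (h : e j < e i) : e k < e i := by
  by_contra! hk
  rcases Nat.eq_or_lt_of_le hk with hk | hk
  · have := eq_zero_of_apply_eq he hi (hij.trans hjk) hkn hk; omega
  · exact he.2.1 ⟨i, j, k, hi, hij, hjk, hkn, h, hk⟩

end Avoiders

section RunOfAvoider

variable {n p : ℕ} {e : ℕ → ℕ}

lemma exists_hasRank (hn : 1 ≤ n) (he : e ∈ avoiders n) : ∃ t, HasRank n e t := by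
  have hp := prMax_firstDescent hn e
  have := apply_lt_of_mem he hp.1 hp.2.1
  exact ⟨firstDescent n e - e (firstDescent n e) - 1, _, hp, by omega⟩

/-- Positive entries are distinct, so they strictly increase along the first run. -/
lemma add_le_apply_add_of_prMax (he : e ∈ avoiders n) (hp : PrMax n e p) {j : ℕ} (hj : 1 ≤ j)
    (hpos : 0 < e j) : ∀ d, j + d ≤ p → e j + d ≤ e (j + d)
  | 0, _ => le_rfl
  | d + 1, hd => by
    have ih := add_le_apply_add_of_prMax he hp hj hpos d (by omega)
    have hle := hp.2.2.1 (j + d) (by omega) (by omega)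
    have hne : e (j + d) ≠ e (j + d + 1) := fun h => by
      have := eq_zero_of_apply_eq he (by omega) (Nat.lt_succ_self _) (by have := hp.2.1; omega) h
      omega
    rw [← add_assoc j d 1]
    omega

lemma apply_lt_peak_of_lt (he : e ∈ avoiders n) (hp : PrMax n e p) {k : ℕ} (hpk : p < k)
    (hkn : k ≤ n) : e k < e p := by
  have hd := hp.apply_succ_lt (by omega)
  rcases Nat.eq_or_lt_of_le (Nat.succ_le_of_lt hpk) with rfl | hk
  · exact hd
  · exact apply_lt_of_apply_lt he hp.1 (Nat.lt_succ_self p) hk hkn hd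

lemma apply_lt_of_prMax (he : e ∈ avoiders n) (hp : PrMax n e p) {j : ℕ} (hj : 1 ≤ j)
    (hjn : j ≤ n) : e j < p := by
  have := apply_lt_of_mem he hp.1 hp.2.1
  rcases le_or_gt j p with hjp | hjp
  · have := hp.apply_le_apply hj hjp le_rfl; omega
  · have := apply_lt_peak_of_lt he hp hjp hjn; omega

lemma two_le_of_prMax (he : e ∈ avoiders n) (hp : PrMax n e p) (hn : 2 ≤ n) : 2 ≤ p := by
  by_contra h
  obtain rfl : p = 1 := by have := hp.1; omega
  have := hp.apply_succ_lt (by omega)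
  rw [apply_one_of_mem he] at this
  omega

/-- In positive rank the peak `e p ≤ p - 2` dominates every entry, and an entry `e j = j - 1`
inside the first run would push the peak up to `p - 1`. -/
lemma add_two_le_of_rank_pos (he : e ∈ avoiders n) (hp : PrMax n e p) (hrank : e p + 2 ≤ p)
    {j : ℕ} (hj : 2 ≤ j) : e j + 2 ≤ j := by
  by_cases hjn : j ≤ n
  swap
  · rw [apply_eq_zero_of_lt he (by omega)]; exact hj
  have hjlt := apply_lt_of_mem he (by omega) hjn
  by_cases hjp : j ≤ p
  · by_contra hcon
    have := add_le_apply_add_of_prMax he hp (j := j) (by omega) (by omega) (p - j) (by omega)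
    rw [Nat.add_sub_cancel' hjp] at this
    omega
  · have := apply_lt_peak_of_lt he hp (by omega) hjn
    omega

end RunOfAvoider

lemma avoiders_finite (n : ℕ) : (avoiders n).Finite := by
  let restrict : (ℕ → ℕ) → Fin (n + 1) → ℕ := fun e i => e i
  refine Set.Finite.of_finite_image (f := restrict)
    ((Set.finite_Iic fun _ : Fin (n + 1) => n).subset ?_) ?_
  · rintro _ ⟨e, he, rfl⟩ i
    rcases Nat.eq_zero_or_pos (i : ℕ) with hi | hi
    · simp [restrict, hi, apply_zero_of_mem he]
    · have := apply_lt_of_mem he hi (Nat.lt_succ_iff.mp i.isLt)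
      simp only [restrict]
      omega
  · intro e₁ he₁ e₂ he₂ h
    funext i
    rcases le_or_gt i n with hi | hi
    · exact congrFun h ⟨i, Nat.lt_succ_of_le hi⟩
    · rw [apply_eq_zero_of_lt he₁ hi, apply_eq_zero_of_lt he₂ hi]

def insertAt (r v : ℕ) (e : ℕ → ℕ) : ℕ → ℕ :=
  fun i => if i < r then e i else if i = r then v else e (i - 1)

def deleteAt (r : ℕ) (e : ℕ → ℕ) : ℕ → ℕ := fun i => if i < r then e i else e (i + 1)

section InsertDelete

variable {n r v i : ℕ} {e : ℕ → ℕ}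

lemma insertAt_of_lt (h : i < r) : insertAt r v e i = e i := if_pos h

@[simp] lemma insertAt_self : insertAt r v e r = v := by simp [insertAt]

lemma insertAt_of_gt (h : r < i) : insertAt r v e i = e (i - 1) := by
  simp [insertAt, h.not_gt, h.ne']

lemma deleteAt_of_lt (h : i < r) : deleteAt r e i = e i := if_pos h

lemma deleteAt_of_ge (h : r ≤ i) : deleteAt r e i = e (i + 1) := if_neg h.not_gt

@[simp] lemma deleteAt_insertAt : deleteAt r (insertAt r v e) = e := by
  funext i
  rcases lt_or_ge i r with h | h
  · rw [deleteAt_of_lt h, insertAt_of_lt h]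
  · rw [deleteAt_of_ge h, insertAt_of_gt (by omega), Nat.add_sub_cancel]

lemma insertAt_deleteAt (hv : e r = v) : insertAt r v (deleteAt r e) = e := by
  funext i
  rcases lt_trichotomy i r with h | rfl | h
  · rw [insertAt_of_lt h, deleteAt_of_lt h]
  · rw [insertAt_self, hv]
  · rw [insertAt_of_gt h, deleteAt_of_ge (by omega), Nat.sub_add_cancel (by omega)]

lemma contains_of_contains_deleteAt {P : ℕ → ℕ → ℕ → Prop} (h : Contains n P (deleteAt r e)) :
    Contains (n + 1) P e := by
  obtain ⟨i, j, k, hi, hij, hjk, hkn, hP⟩ := h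
  simp only [deleteAt] at hP
  refine ⟨if i < r then i else i + 1, if j < r then j else j + 1, if k < r then k else k + 1,
    ?_, ?_, ?_, ?_, by split_ifs at hP ⊢ <;> exact hP⟩ <;> split_ifs <;> omega

lemma contains_of_contains_insertAt {P : ℕ → ℕ → ℕ → Prop} (hr : 1 ≤ r) (hrn : r ≤ n + 1)
    (h : Contains (n + 1) P (insertAt r v e)) :
    Contains n P e ∨ (∃ j k, r ≤ j ∧ j < k ∧ k ≤ n ∧ P v (e j) (e k)) ∨
      (∃ i k, 1 ≤ i ∧ i < r ∧ r ≤ k ∧ k ≤ n ∧ P (e i) v (e k)) ∨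
      (∃ i j, 1 ≤ i ∧ i < j ∧ j < r ∧ P (e i) (e j) v) := by
  obtain ⟨i, j, k, hi, hij, hjk, hkn, hP⟩ := h
  by_cases hir : i = r
  · subst hir
    rw [insertAt_self, insertAt_of_gt hij, insertAt_of_gt (hij.trans hjk)] at hP
    exact Or.inr (Or.inl ⟨j - 1, k - 1, by omega, by omega, by omega, hP⟩)
  by_cases hjr : j = r
  · subst hjr
    rw [insertAt_self, insertAt_of_lt hij, insertAt_of_gt hjk] at hP
    exact Or.inr (Or.inr (Or.inl ⟨i, k - 1, hi, hij, by omega, by omega, hP⟩))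
  by_cases hkr : k = r
  · subst hkr
    rw [insertAt_self, insertAt_of_lt (hij.trans hjk), insertAt_of_lt hjk] at hP
    exact Or.inr (Or.inr (Or.inr ⟨i, j, hi, hij, hjk, hP⟩))
  left
  have hval : ∀ m, m ≠ r → insertAt r v e m = e (if m < r then m else m - 1) := by
    intro m hm
    split_ifs with h
    · exact insertAt_of_lt h
    · exact insertAt_of_gt (by omega)
  rw [hval i hir, hval j hjr, hval k hkr] at hP
  refine ⟨if i < r then i else i - 1, if j < r then j else j - 1, if k < r then k else k - 1,
    ?_, ?_, ?_, ?_, hP⟩ <;> split_ifs <;> omega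

lemma isInvSeq_insertAt (he : IsInvSeq n e) (hr : 1 ≤ r) (hrn : r ≤ n + 1) (hv : v < r) :
    IsInvSeq (n + 1) (insertAt r v e) := by
  refine ⟨by rw [insertAt_of_lt hr, he.1], fun i hi hin => ?_, fun i hi => ?_⟩
  · rcases lt_trichotomy i r with h | rfl | h
    · rw [insertAt_of_lt h]; exact he.2.1 i hi (by omega)
    · rwa [insertAt_self]
    · rw [insertAt_of_gt h]; have := he.2.1 (i - 1) (by omega) (by omega); omega
  · rw [insertAt_of_gt (by omega)]; exact he.2.2 _ (by omega)

lemma deleteAt_mem_avoiders (he : e ∈ avoiders (n + 1)) (hr : 1 ≤ r) (hrn : r ≤ n + 1)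
    (hbound : ∀ i, r ≤ i → i ≤ n → e (i + 1) < i) : deleteAt r e ∈ avoiders n := by
  refine ⟨⟨?_, fun i hi hin => ?_, fun i hi => ?_⟩,
    fun h => he.2.1 (contains_of_contains_deleteAt h),
    fun h => he.2.2 (contains_of_contains_deleteAt h)⟩
  · rw [deleteAt_of_lt hr, apply_zero_of_mem he]
  · rcases lt_or_ge i r with h | h
    · rw [deleteAt_of_lt h]; exact apply_lt_of_mem he hi (by omega)
    · rw [deleteAt_of_ge h]; exact hbound i h hin
  · rcases lt_or_ge i r with h | h
    · rw [deleteAt_of_lt h]; exact apply_eq_zero_of_lt he (by omega)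
    · rw [deleteAt_of_ge h]; exact apply_eq_zero_of_lt he (by omega)

end InsertDelete

section Shift

variable {n q t : ℕ} {e : ℕ → ℕ}

lemma insertAt_one_zero_mem_avoiders (he : e ∈ avoiders n) :
    insertAt 1 0 e ∈ avoiders (n + 1) := by
  refine ⟨isInvSeq_insertAt he.1 le_rfl (by omega) one_pos, fun h => ?_, fun h => ?_⟩
  · rcases contains_of_contains_insertAt le_rfl (by omega) h with
      h | ⟨j, k, -, -, -, hb, -⟩ | ⟨i, k, hi, hi1, -⟩ | ⟨i, j, hi, hij, hj1, -⟩
    · exact he.2.1 h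
    · exact Nat.not_lt_zero _ hb
    · omega
    · omega
  · rcases contains_of_contains_insertAt le_rfl (by omega) h with
      h | ⟨j, k, hj, hjk, hkn, hb, hc⟩ | ⟨i, k, hi, hi1, -⟩ | ⟨i, j, hi, hij, hj1, -⟩
    · exact he.2.2 h
    · have := eq_zero_of_apply_eq he hj hjk hkn hc; omega
    · omega
    · omega

lemma prMax_insertAt_one_zero (hq : PrMax n e q) : PrMax (n + 1) (insertAt 1 0 e) (q + 1) := by
  refine ⟨by omega, by have := hq.2.1; omega, fun i hi hiq => ?_, ?_⟩
  · rcases Nat.eq_or_lt_of_le hi with rfl | hi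
    · rw [insertAt_self]; exact Nat.zero_le _
    · rw [insertAt_of_gt hi, insertAt_of_gt (by omega), Nat.add_sub_cancel]
      have := hq.2.2.1 (i - 1) (by omega) (by omega)
      rwa [Nat.sub_add_cancel hi.le] at this
  · refine hq.2.2.2.imp (fun h => by omega) fun h => ?_
    rw [insertAt_of_gt (by omega), insertAt_of_gt (by have := hq.1; omega)]
    simpa using h

lemma insertAt_one_zero_mem_rankSet (he : e ∈ rankSet n t) :
    insertAt 1 0 e ∈ rankSet (n + 1) (t + 1) := by
  obtain ⟨hav, q, hq, hqe⟩ := he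
  refine ⟨insertAt_one_zero_mem_avoiders hav, q + 1, prMax_insertAt_one_zero hq, ?_⟩
  rw [insertAt_of_gt (by have := hq.1; omega), Nat.add_sub_cancel]
  omega

lemma deleteAt_one_mem_rankSet (hn : 1 ≤ n) (he : e ∈ avoiders (n + 1))
    (hrank : HasRank (n + 1) e (t + 1)) : deleteAt 1 e ∈ rankSet n t := by
  obtain ⟨p, hp, hpe⟩ := hrank
  have hdel : deleteAt 1 e ∈ avoiders n :=
    deleteAt_mem_avoiders he le_rfl (by omega) fun i hi _ => by
      have := add_two_le_of_rank_pos he hp (by omega) (j := i + 1) (by omega)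
      omega
  obtain ⟨s, hs⟩ := exists_hasRank hn hdel
  have hs' := (insertAt_one_zero_mem_rankSet ⟨hdel, hs⟩).2
  rw [insertAt_deleteAt (apply_one_of_mem he)] at hs'
  obtain rfl : s = t := by have := hs'.unique ⟨p, hp, hpe⟩; omega
  exact ⟨hdel, hs⟩

lemma ncard_rankSet_succ_succ (hn : 1 ≤ n) :
    (rankSet (n + 1) (t + 1)).ncard = (rankSet n t).ncard :=
  (Set.InvOn.bijOn (f' := insertAt 1 0)
    ⟨fun _ he => insertAt_deleteAt (apply_one_of_mem he.1), fun _ _ => deleteAt_insertAt⟩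
    (fun _ he => deleteAt_one_mem_rankSet hn he.1 he.2)
    fun _ he => insertAt_one_zero_mem_rankSet he).ncard_eq

lemma ncard_avoiders_succ (hn : 1 ≤ n) :
    (avoiders (n + 1)).ncard = (rankSet (n + 1) 0).ncard + (avoiders n).ncard := by
  have hbij : Set.BijOn (deleteAt 1) (avoiders (n + 1) \ rankSet (n + 1) 0) (avoiders n) := by
    refine Set.InvOn.bijOn (f' := insertAt 1 0)
      ⟨fun _ he => insertAt_deleteAt (apply_one_of_mem he.1), fun _ _ => deleteAt_insertAt⟩ ?_ ?_
    · rintro e ⟨he, hne⟩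
      obtain ⟨t, ht⟩ := exists_hasRank (by omega) he
      obtain ⟨s, rfl⟩ : ∃ s, t = s + 1 :=
        Nat.exists_eq_succ_of_ne_zero (by rintro rfl; exact hne ⟨he, ht⟩)
      exact (deleteAt_one_mem_rankSet hn he ht).1
    · intro e he
      obtain ⟨t, ht⟩ := exists_hasRank hn he
      have h := insertAt_one_zero_mem_rankSet ⟨he, ht⟩
      exact ⟨h.1, fun h0 => by have := h0.2.unique h.2; omega⟩
  rw [← hbij.ncard_eq, ← Set.ncard_sdiff_add_ncard_of_subset
    (fun _ he => he.1 : rankSet (n + 1) 0 ⊆ _) (avoiders_finite _), Nat.add_comm]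

end Shift

/-- Among rank-`0` avoiders, these are the ones obtained from a shorter avoider by inserting the
new peak `q` right after its first descent `q`. -/
def SteepDescent (n : ℕ) (e : ℕ → ℕ) : Prop :=
  firstDescent n e = n ∨ e (firstDescent n e + 1) < e (firstDescent n e - 1)

section PeakInsertion

variable {n p q : ℕ} {e : ℕ → ℕ}

lemma insertAt_peak_mem_avoiders (he : e ∈ avoiders n) (hq : PrMax n e q) :
    insertAt (q + 1) q e ∈ avoiders (n + 1) := by
  have hlt : ∀ {j}, 1 ≤ j → j ≤ n → e j < q := apply_lt_of_prMax he hq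
  have hq1 := hq.1
  have hqn := hq.2.1
  refine ⟨isInvSeq_insertAt he.1 (by omega) (by omega) (by omega), fun h => ?_, fun h => ?_⟩
  · rcases contains_of_contains_insertAt (by omega) (by omega) h with
      h | ⟨j, k, hj, hjk, hkn, -, hc⟩ | ⟨i, k, hi, hiq, -, -, hb, -⟩ | ⟨i, j, hi, hij, hjq, hb, -⟩
    · exact he.2.1 h
    · have := hlt (j := k) (by omega) hkn; omega
    · have := hlt hi (by omega); omega
    · have := hq.apply_le_apply hi hij.le (by omega); omega
  · rcases contains_of_contains_insertAt (by omega) (by omega) h with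
      h | ⟨j, k, hj, hjk, hkn, hb, -⟩ | ⟨i, k, -, -, hk, hkn, -, hc⟩ | ⟨i, j, -, hij, hjq, -, hc⟩
    · exact he.2.2 h
    · have := hlt (j := j) (by omega) (by omega); omega
    · have := hlt (j := k) (by omega) hkn; omega
    · have := hlt (j := j) (by omega) (by omega); omega

lemma prMax_insertAt_peak (he : e ∈ avoiders n) (hq : PrMax n e q) :
    PrMax (n + 1) (insertAt (q + 1) q e) (q + 1) := by
  refine ⟨by omega, by have := hq.2.1; omega, fun i hi hiq => ?_, ?_⟩
  · rcases Nat.lt_or_ge i q with h | h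
    · rw [insertAt_of_lt (by omega), insertAt_of_lt (by omega)]
      exact hq.2.2.1 i hi h
    · obtain rfl : i = q := by omega
      rw [insertAt_of_lt (by omega), insertAt_self]
      exact (apply_lt_of_mem he hq.1 hq.2.1).le
  · rcases Nat.eq_or_lt_of_le hq.2.1 with h | h
    · exact Or.inl (by omega)
    · right
      rw [insertAt_self, insertAt_of_gt (by omega), Nat.add_sub_cancel]
      exact apply_lt_of_prMax he hq (by omega) h

lemma insertAt_peak_mem (he : e ∈ avoiders n) (hq : PrMax n e q) :
    insertAt (q + 1) q e ∈ rankSet (n + 1) 0 ∩ {e | SteepDescent (n + 1) e} := by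
  have hp := prMax_insertAt_peak he hq
  refine ⟨⟨insertAt_peak_mem_avoiders he hq, q + 1, hp, by rw [insertAt_self]⟩, ?_⟩
  change SteepDescent _ _
  rw [SteepDescent, hp.firstDescent_eq, Nat.add_sub_cancel, insertAt_of_lt (Nat.lt_succ_self q),
    insertAt_of_gt (by omega), Nat.add_sub_cancel]
  exact hq.2.2.2.imp (fun h => by omega) id

lemma deleteAt_peak_mem (hn : 1 ≤ n) (he : e ∈ rankSet (n + 1) 0) (hsteep : SteepDescent (n + 1) e)
    (hp : PrMax (n + 1) e p) : deleteAt p e ∈ avoiders n ∧ PrMax n (deleteAt p e) (p - 1) := by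
  obtain ⟨hav, p', hp', hpe⟩ := he
  obtain rfl := hp'.unique hp
  rw [SteepDescent, hp.firstDescent_eq] at hsteep
  have hp2 := two_le_of_prMax hav hp (by omega)
  have hpn := hp.2.1
  refine ⟨deleteAt_mem_avoiders hav (by omega) hpn fun i hi hin => ?_, by omega, by omega,
    fun i hi hip => ?_, ?_⟩
  · have := apply_lt_peak_of_lt hav hp (k := i + 1) (by omega) (by omega); omega
  · rw [deleteAt_of_lt (by omega), deleteAt_of_lt (by omega)]
    exact hp.2.2.1 i hi (by omega)
  · refine hsteep.imp (fun h => by omega) fun h => ?_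
    rw [Nat.sub_add_cancel (by omega), deleteAt_of_ge le_rfl, deleteAt_of_lt (by omega)]
    exact h

lemma ncard_rankSet_zero_inter_steepDescent (hn : 1 ≤ n) :
    (rankSet (n + 1) 0 ∩ {e | SteepDescent (n + 1) e}).ncard = (avoiders n).ncard := by
  refine (Set.InvOn.bijOn (f := fun e => deleteAt (firstDescent (n + 1) e) e)
    (f' := fun e => insertAt (firstDescent n e + 1) (firstDescent n e) e) ⟨?_, ?_⟩ ?_ ?_).ncard_eq
  · rintro e ⟨he, hsteep⟩
    have hp := prMax_firstDescent (by omega : 1 ≤ n + 1) e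
    have hpe : e (firstDescent (n + 1) e) = firstDescent (n + 1) e - 1 := by
      obtain ⟨-, p, hp', hpe⟩ := he; rw [← hp'.firstDescent_eq] at hpe; omega
    have hp2 := two_le_of_prMax he.1 hp (by omega)
    simp only [(deleteAt_peak_mem hn he hsteep hp).2.firstDescent_eq, Nat.sub_add_cancel
      (by omega : 1 ≤ firstDescent (n + 1) e)]
    exact insertAt_deleteAt hpe
  · intro e he
    simp only [(prMax_insertAt_peak he (prMax_firstDescent hn e)).firstDescent_eq]
    exact deleteAt_insertAt
  · rintro e ⟨he, hsteep⟩
    exact (deleteAt_peak_mem hn he hsteep (prMax_firstDescent (by omega) e)).1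
  · intro e he
    exact insertAt_peak_mem he (prMax_firstDescent hn e)

end PeakInsertion

section PeakSwap

variable {n x p : ℕ} {e : ℕ → ℕ}

lemma contains_of_contains_comp_swap {P : ℕ → ℕ → ℕ → Prop} (hx : 1 ≤ x) (hxn : x + 1 ≤ n)
    (h : Contains n P (e ∘ Equiv.swap x (x + 1))) :
    Contains n P e ∨ (∃ i, 1 ≤ i ∧ i < x ∧ P (e i) (e (x + 1)) (e x)) ∨
      (∃ k, x + 1 < k ∧ k ≤ n ∧ P (e (x + 1)) (e x) (e k)) := by
  obtain ⟨i, j, k, hi, hij, hjk, hkn, hP⟩ := h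
  simp only [Function.comp_apply] at hP
  by_cases hjk' : j = x ∧ k = x + 1
  · obtain ⟨rfl, rfl⟩ := hjk'
    rw [Equiv.swap_apply_of_ne_of_ne (x := i) (by omega) (by omega), Equiv.swap_apply_left,
      Equiv.swap_apply_right] at hP
    exact Or.inr (Or.inl ⟨i, hi, hij, hP⟩)
  by_cases hij' : i = x ∧ j = x + 1
  · obtain ⟨rfl, rfl⟩ := hij'
    rw [Equiv.swap_apply_left, Equiv.swap_apply_right,
      Equiv.swap_apply_of_ne_of_ne (x := k) (by omega) (by omega)] at hP
    exact Or.inr (Or.inr ⟨k, hjk, hkn, hP⟩)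
  refine Or.inl ⟨Equiv.swap x (x + 1) i, Equiv.swap x (x + 1) j, Equiv.swap x (x + 1) k,
    ?_, ?_, ?_, ?_, hP⟩ <;> simp only [Equiv.swap_apply_def] <;> split_ifs <;> omega

@[simp] lemma comp_swap_apply_left : (e ∘ Equiv.swap x (x + 1)) x = e (x + 1) := by simp

@[simp] lemma comp_swap_apply_right : (e ∘ Equiv.swap x (x + 1)) (x + 1) = e x := by simp

lemma comp_swap_apply_of_ne {i : ℕ} (h₁ : i ≠ x) (h₂ : i ≠ x + 1) :
    (e ∘ Equiv.swap x (x + 1)) i = e i := by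
  simp [Equiv.swap_apply_of_ne_of_ne h₁ h₂]

/-- No pattern can involve both swapped entries when one of them is a strict maximum and the
other dominates everything to their left. -/
lemma comp_swap_mem_avoiders (he : e ∈ avoiders n) (hx : 1 ≤ x) (hxn : x + 1 ≤ n)
    (hbound : e (x + 1) < x) (hne : e x ≠ e (x + 1))
    (hleft : ∀ i, 1 ≤ i → i < x → e i ≤ min (e x) (e (x + 1)))
    (hright : ∀ k, x + 1 < k → k ≤ n → e k < max (e x) (e (x + 1))) :
    e ∘ Equiv.swap x (x + 1) ∈ avoiders n := by
  refine ⟨⟨?_, fun i hi hin => ?_, fun i hi => ?_⟩, fun h => ?_, fun h => ?_⟩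
  · rw [comp_swap_apply_of_ne (by omega) (by omega), apply_zero_of_mem he]
  · by_cases h₁ : i = x
    · rw [h₁, comp_swap_apply_left]; omega
    by_cases h₂ : i = x + 1
    · rw [h₂, comp_swap_apply_right]; have := apply_lt_of_mem he hx (by omega); omega
    rw [comp_swap_apply_of_ne h₁ h₂]; exact apply_lt_of_mem he hi hin
  · rw [comp_swap_apply_of_ne (by omega) (by omega), apply_eq_zero_of_lt he hi]
  · rcases contains_of_contains_comp_swap hx hxn h with
      h | ⟨i, hi, hix, hb, hc⟩ | ⟨k, hk, hkn, hb, hc⟩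
    · exact he.2.1 h
    · have := hleft i hi hix; omega
    · have := hright k hk hkn; omega
  · rcases contains_of_contains_comp_swap hx hxn h with
      h | ⟨i, -, -, -, hc⟩ | ⟨k, hk, hkn, hb, hc⟩
    · exact he.2.2 h
    · exact hne hc.symm
    · have := hright k hk hkn; omega

lemma comp_swap_mem_rankSet_one (hn : 2 ≤ n) (he : e ∈ rankSet (n + 1) 0)
    (hsteep : ¬ SteepDescent (n + 1) e) (hp : PrMax (n + 1) e p) :
    e ∘ Equiv.swap p (p + 1) ∈ rankSet (n + 1) 1 ∧
      PrMax (n + 1) (e ∘ Equiv.swap p (p + 1)) (p + 1) := by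
  obtain ⟨hav, p', hp', hpe⟩ := he
  obtain rfl := hp.unique hp'
  rw [SteepDescent, hp.firstDescent_eq, not_or, not_lt] at hsteep
  obtain ⟨hpn, hle⟩ := hsteep
  have hp2 := two_le_of_prMax hav hp (by omega)
  have hpn : p < n + 1 := lt_of_le_of_ne hp.2.1 hpn
  have hd := hp.apply_succ_lt hpn
  have hleft : ∀ i, 1 ≤ i → i < p → e i ≤ e (p + 1) := fun i hi hip =>
    (hp.apply_le_apply hi (by omega : i ≤ p - 1) (by omega)).trans (by simpa using hle)
  have hright : ∀ k, p + 1 < k → k ≤ n + 1 → e k < e p := fun k hk hkn =>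
    apply_lt_peak_of_lt hav hp (by omega) hkn
  have hf : PrMax (n + 1) (e ∘ Equiv.swap p (p + 1)) (p + 1) := by
    refine ⟨by omega, hpn, fun i hi hip => ?_, ?_⟩
    · by_cases h₁ : i = p
      · rw [h₁, comp_swap_apply_left, comp_swap_apply_right]; exact hd.le
      by_cases h₂ : i + 1 = p
      · obtain rfl : p = i + 1 := h₂.symm
        rw [comp_swap_apply_of_ne (by omega) (by omega), comp_swap_apply_left]
        exact hleft i hi (by omega)
      rw [comp_swap_apply_of_ne h₁ (by omega), comp_swap_apply_of_ne h₂ (by omega)]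
      exact hp.2.2.1 i hi (by omega)
    · refine (Nat.eq_or_lt_of_le hpn).imp id fun h => ?_
      rw [comp_swap_apply_of_ne (by omega : p + 1 + 1 ≠ p) (by omega), comp_swap_apply_right]
      exact hright _ (by omega) h
  refine ⟨⟨comp_swap_mem_avoiders hav (by omega) hpn (by omega) hd.ne'
    (fun i hi hip => by have := hleft i hi hip; omega)
    (fun k hk hkn => by have := hright k hk hkn; omega), p + 1, hf, by rw [comp_swap_apply_right]; omega⟩, hf⟩

lemma comp_swap_mem_rankSet_zero (hn : 2 ≤ n) (he : e ∈ rankSet (n + 1) 1)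
    (hq : PrMax (n + 1) e (x + 1)) :
    e ∘ Equiv.swap x (x + 1) ∈ rankSet (n + 1) 0 \ {e | SteepDescent (n + 1) e} ∧
      PrMax (n + 1) (e ∘ Equiv.swap x (x + 1)) x := by
  obtain ⟨hav, q, hq', hqe⟩ := he
  obtain rfl := hq.unique hq'
  have hx1 : 1 ≤ x := by have := two_le_of_prMax hav hq (by omega); omega
  have hqn := hq.2.1
  have hx2 : 2 ≤ x := by
    by_contra h
    obtain rfl : x = 1 := by omega
    have := hq.apply_succ_lt (by omega)
    omega
  have hasc : e x < e (x + 1) := by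
    refine lt_of_le_of_ne (hq.2.2.1 x hx1 (by omega)) fun h => ?_
    have := eq_zero_of_apply_eq hav hx1 (Nat.lt_succ_self x) hqn h
    omega
  have hleft : ∀ i, 1 ≤ i → i ≤ x → e i ≤ e x := fun i hi hix =>
    hq.apply_le_apply hi hix (by omega)
  have hf : PrMax (n + 1) (e ∘ Equiv.swap x (x + 1)) x := by
    refine ⟨hx1, by omega, fun i hi hix => ?_, Or.inr (by rwa [comp_swap_apply_left, comp_swap_apply_right])⟩
    rw [comp_swap_apply_of_ne (by omega) (by omega)]
    by_cases h : i + 1 = x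
    · rw [h, comp_swap_apply_left]; exact (hleft i hi (by omega)).trans hasc.le
    · rw [comp_swap_apply_of_ne h (by omega)]; exact hq.2.2.1 i hi (by omega)
  refine ⟨⟨⟨comp_swap_mem_avoiders hav hx1 hqn (by omega) hasc.ne
    (fun i hi hix => by have := hleft i hi hix.le; omega)
    (fun k hk hkn => by have := apply_lt_peak_of_lt hav hq hk hkn; omega), x, hf, by rw [comp_swap_apply_left]; omega⟩,
    fun hsteep => ?_⟩, hf⟩
  change SteepDescent _ _ at hsteep
  rw [SteepDescent, hf.firstDescent_eq, comp_swap_apply_of_ne (i := x - 1) (by omega) (by omega),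
    comp_swap_apply_right] at hsteep
  have := hleft (x - 1) (by omega) (by omega)
  omega

lemma ncard_rankSet_zero_diff_steepDescent (hn : 2 ≤ n) :
    (rankSet (n + 1) 0 \ {e | SteepDescent (n + 1) e}).ncard = (rankSet (n + 1) 1).ncard := by
  have hσ : ∀ (a b : ℕ) (e : ℕ → ℕ), e ∘ Equiv.swap a b ∘ Equiv.swap a b = e := fun a b e => by
    funext i; simp [Equiv.swap_apply_self]
  have hq : ∀ e, PrMax (n + 1) e (firstDescent (n + 1) e - 1 + 1) := fun e => by
    rw [Nat.sub_add_cancel (prMax_firstDescent (by omega) e).1]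
    exact prMax_firstDescent (by omega) e
  refine (Set.InvOn.bijOn
    (f := fun e => e ∘ Equiv.swap (firstDescent (n + 1) e) (firstDescent (n + 1) e + 1))
    (f' := fun e => e ∘ Equiv.swap (firstDescent (n + 1) e - 1) (firstDescent (n + 1) e - 1 + 1))
    ⟨?_, ?_⟩ ?_ ?_).ncard_eq
  · rintro e ⟨he, hsteep⟩
    have hf := (comp_swap_mem_rankSet_one hn he hsteep (prMax_firstDescent (by omega) e)).2
    simp only [hf.firstDescent_eq, Nat.add_sub_cancel]
    exact hσ _ _ e
  · intro e he
    simp only [(comp_swap_mem_rankSet_zero hn he (hq e)).2.firstDescent_eq]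
    exact hσ _ _ e
  · rintro e ⟨he, hsteep⟩
    exact (comp_swap_mem_rankSet_one hn he hsteep (prMax_firstDescent (by omega) e)).1
  · intro e he
    exact (comp_swap_mem_rankSet_zero hn he (hq e)).1

end PeakSwap

lemma rankSet_finite (n t : ℕ) : (rankSet n t).Finite :=
  (avoiders_finite n).subset fun _ he => he.1

lemma avoiders_one : avoiders 1 = {0} := by
  ext e
  refine ⟨fun he => funext fun i => ?_, ?_⟩
  · rcases Nat.lt_or_ge i 2 with h | h
    · interval_cases i
      · exact apply_zero_of_mem he
      · exact apply_one_of_mem he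
    · exact apply_eq_zero_of_lt he (by omega)
  · rintro rfl
    exact ⟨⟨rfl, fun i hi _ => hi, fun _ _ => rfl⟩, fun ⟨_, _, _, _, _, _, _, _⟩ => by omega,
      fun ⟨_, _, _, _, _, _, _, _⟩ => by omega⟩

lemma rankSet_two_zero_subset_steepDescent : rankSet 2 0 ⊆ {e | SteepDescent 2 e} := by
  intro e he
  have hp := prMax_firstDescent (by omega : 1 ≤ 2) e
  have := two_le_of_prMax he.1 hp le_rfl
  exact Or.inl (by have := hp.2.1; omega)

lemma ncard_rankSet_zero_succ {n : ℕ} (hn : 1 ≤ n) : (rankSet (n + 1) 0).ncard =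
    (avoiders n).ncard + (rankSet (n + 1) 0 \ {e | SteepDescent (n + 1) e}).ncard := by
  rw [← ncard_rankSet_zero_inter_steepDescent hn,
    Set.ncard_inter_add_ncard_sdiff_eq_ncard _ _ (rankSet_finite _ _)]

lemma ncard_rankSet_zero_and_ncard_avoiders (k : ℕ) :
    (rankSet (k + 2) 0).ncard = Nat.fib (2 * k + 2) ∧
      (avoiders (k + 2)).ncard = Nat.fib (2 * k + 3) := by
  induction k with
  | zero =>
    have hrank : (rankSet 2 0).ncard = 1 := by
      rw [ncard_rankSet_zero_succ le_rfl, avoiders_one,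
        Set.sdiff_eq_empty.mpr rankSet_two_zero_subset_steepDescent]
      simp
    refine ⟨hrank, ?_⟩
    rw [ncard_avoiders_succ le_rfl, hrank, avoiders_one]
    simp [Nat.fib_add_two]
  | succ k ih =>
    have hrank : (rankSet (k + 3) 0).ncard = Nat.fib (2 * k + 4) := by
      rw [ncard_rankSet_zero_succ (by omega), ncard_rankSet_zero_diff_steepDescent (by omega),
        ncard_rankSet_succ_succ (by omega), ih.1, ih.2, Nat.fib_add_two (n := 2 * k + 2)]
      ring
    refine ⟨hrank, ?_⟩
    rw [ncard_avoiders_succ (by omega), hrank, ih.2, show 2 * (k + 1) + 3 = 2 * k + 3 + 2 by ring,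
      Nat.fib_add_two (n := 2 * k + 3)]
    ring

lemma ncard_rankSet_add {n : ℕ} (hn : 1 ≤ n) : ∀ t, (rankSet (n + t) t).ncard = (rankSet n 0).ncard
  | 0 => rfl
  | t + 1 => by rw [← Nat.add_assoc, ncard_rankSet_succ_succ (by omega), ncard_rankSet_add hn t]

end InvSeqAvoid

theorem stmt3 (n t : ℕ) (hn : 2 ≤ n) (ht : t ≤ n - 2) :
    {e : ℕ → ℕ | IsInvSeq n e ∧ ¬ Contains n Pat102 e ∧ ¬ Contains n Pat011 e ∧
      HasRank n e t}.ncard = Nat.fib (2 * n - 2 * t - 2) := by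
  have hset : {e : ℕ → ℕ | IsInvSeq n e ∧ ¬ Contains n Pat102 e ∧ ¬ Contains n Pat011 e ∧
      HasRank n e t} = InvSeqAvoid.rankSet n t := by
    ext e
    simp [InvSeqAvoid.rankSet, InvSeqAvoid.avoiders, and_assoc]
  obtain ⟨k, rfl⟩ : ∃ k, n = k + 2 + t := ⟨n - 2 - t, by omega⟩
  rw [hset, InvSeqAvoid.ncard_rankSet_add (by omega),
    (InvSeqAvoid.ncard_rankSet_zero_and_ncard_avoiders k).1]
  congr 1
  omega
end

section
/- For positive integers k ≤ n, the number of Dyck paths of semilength n that end with the subpath u d^k (one up step followed by exactly k down steps, i.e., the last k steps are down and the step before them is up with the path not having a (k+1)-th trailing down step) equals (k/n) · C(2n-k-1, n-1). -/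
/-- Number of up steps (`true`) in a list of steps. -/
def upCount (L : List Bool) : ℕ := (L.filter id).length

/-- A Dyck path of semilength `n`: `2n` steps (`true` = up, `false` = down),
`n` up steps, every prefix has at least as many ups as downs. -/
def IsDyck (n : ℕ) (L : List Bool) : Prop :=
  L.length = 2 * n ∧ upCount L = n ∧ ∀ k, k ≤ L.length → k ≤ 2 * upCount (L.take k)

/-!
Removing the final `u d^k` identifies these Dyck paths with the paths of length `m = 2n - k - 1`
with `n - 1` up steps that never go below the axis. By the ballot theorem there are
`C(m, j) - C(m, j + 1)` such paths with `j` up steps when `m ≤ 2j`: deleting the last step shows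
that both sides satisfy Pascal's recurrence, the boundary case `m = 2j + 1` having no paths and
`C(2j + 1, j) = C(2j + 1, j + 1)`. Since `n C(m, n) = (n - k) C(m, n - 1)`, the count times `n` is
`k C(m, n - 1)`.
-/

def IsBallotSeq (L : List Bool) : Prop := ∀ k, k ≤ L.length → k ≤ 2 * upCount (L.take k)

def ballotPaths (m j : ℕ) : Set (List Bool) :=
  {L | L.length = m ∧ upCount L = j ∧ IsBallotSeq L}

@[simp]
lemma upCount_append (L M : List Bool) : upCount (L ++ M) = upCount L + upCount M := by
  simp [upCount, List.filter_append]

@[simp]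
lemma upCount_replicate_false (k : ℕ) : upCount (List.replicate k false) = 0 := by
  simp [upCount]

@[simp]
lemma upCount_singleton (b : Bool) : upCount [b] = b.toNat := by
  cases b <;> rfl

lemma IsBallotSeq.length_le {L : List Bool} (h : IsBallotSeq L) : L.length ≤ 2 * upCount L := by
  simpa using h L.length le_rfl

lemma isBallotSeq_concat_iff (L : List Bool) (b : Bool) :
    IsBallotSeq (L ++ [b]) ↔ IsBallotSeq L ∧ L.length + 1 ≤ 2 * (upCount L + b.toNat) := by
  constructor
  · intro h
    refine ⟨fun i hi => ?_, by simpa using h.length_le⟩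
    simpa [List.take_append_of_le_length hi] using h i (by simp; omega)
  · rintro ⟨hL, hlast⟩ i hi
    rcases le_or_gt i L.length with h | h
    · simpa [List.take_append_of_le_length h] using hL i h
    · obtain rfl : i = L.length + 1 := by simp at hi; omega
      simpa [List.take_of_length_le] using hlast

lemma isBallotSeq_append_replicate_false_iff (L : List Bool) (k : ℕ) :
    IsBallotSeq (L ++ List.replicate k false) ↔
      IsBallotSeq L ∧ L.length + k ≤ 2 * upCount L := by
  induction k with
  | zero =>
    rw [List.replicate_zero, List.append_nil, Nat.add_zero]
    exact ⟨fun h => ⟨h, h.length_le⟩, And.left⟩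
  | succ k ih =>
    rw [List.replicate_succ', ← List.append_assoc, isBallotSeq_concat_iff, ih]
    simp only [List.length_append, List.length_replicate, upCount_append,
      upCount_replicate_false, Bool.toNat_false]
    exact ⟨fun ⟨⟨h, _⟩, _⟩ => ⟨h, by omega⟩, fun ⟨h, _⟩ => ⟨⟨h, by omega⟩, by omega⟩⟩

lemma ballotPaths_finite (m j : ℕ) : (ballotPaths m j).Finite :=
  (List.finite_length_eq Bool m).subset fun _ hL => hL.1

lemma ballotPaths_eq_empty_of_lt {m j : ℕ} (h : m < j) : ballotPaths m j = ∅ :=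
  Set.eq_empty_of_forall_notMem fun L ⟨hl, hu, _⟩ => by
    have : upCount L ≤ L.length := List.length_filter_le _ _
    omega

lemma ballotPaths_eq_empty_of_two_mul_lt {m j : ℕ} (h : 2 * j < m) : ballotPaths m j = ∅ :=
  Set.eq_empty_of_forall_notMem fun _ ⟨hl, hu, hb⟩ => by have := hb.length_le; omega

lemma ballotPaths_zero_zero : ballotPaths 0 0 = {[]} := by
  ext L
  simp only [ballotPaths, Set.mem_ofPred_eq, Set.mem_singleton_iff, List.length_eq_zero_iff]
  constructor
  · exact fun h => h.1
  · rintro rfl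
    exact ⟨rfl, rfl, fun k hk => by simp_all⟩

lemma ballotPaths_succ_succ {m i : ℕ} (hm : m + 1 ≤ 2 * (i + 1)) :
    ballotPaths (m + 1) (i + 1) =
      (· ++ [true]) '' ballotPaths m i ∪ (· ++ [false]) '' ballotPaths m (i + 1) := by
  ext L
  rcases L.eq_nil_or_concat' with rfl | ⟨L, b, rfl⟩
  · simp [ballotPaths]
  · cases b <;>
      simp [ballotPaths, isBallotSeq_concat_iff, List.append_left_injective [true] |>.eq_iff,
        List.append_left_injective [false] |>.eq_iff] <;> omega

lemma ncard_ballotPaths_succ_succ {m i : ℕ} (hm : m + 1 ≤ 2 * (i + 1)) :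
    (ballotPaths (m + 1) (i + 1)).ncard =
      (ballotPaths m i).ncard + (ballotPaths m (i + 1)).ncard := by
  have hdisj :
      Disjoint ((· ++ [true]) '' ballotPaths m i) ((· ++ [false]) '' ballotPaths m (i + 1)) :=
    Set.disjoint_left.2 fun _ ⟨_, _, hA⟩ ⟨_, _, hB⟩ => by
      simpa [← hA] using congrArg List.getLast? hB
  rw [ballotPaths_succ_succ hm,
    Set.ncard_union_eq hdisj ((ballotPaths_finite m i).image _) ((ballotPaths_finite m _).image _),
    Set.ncard_image_of_injective _ (List.append_left_injective _),
    Set.ncard_image_of_injective _ (List.append_left_injective _)]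

/-- The ballot theorem, in subtraction-free form. -/
theorem ncard_ballotPaths_add_choose {m j : ℕ} (h : m ≤ 2 * j) :
    (ballotPaths m j).ncard + m.choose (j + 1) = m.choose j := by
  induction m generalizing j with
  | zero =>
    rcases j with _ | j
    · simp [ballotPaths_zero_zero]
    · simp [ballotPaths_eq_empty_of_lt (Nat.succ_pos j)]
  | succ m ih =>
    obtain ⟨i, rfl⟩ : ∃ i, j = i + 1 := ⟨j - 1, by omega⟩
    rw [ncard_ballotPaths_succ_succ h, Nat.choose_succ_succ' m i, Nat.choose_succ_succ' m (i + 1)]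
    have hnext := ih (j := i + 1) (by omega)
    rcases le_or_gt m (2 * i) with hm | hm
    · have := ih hm
      omega
    · obtain rfl : m = 2 * i + 1 := by omega
      have := Nat.choose_symm_half i
      rw [ballotPaths_eq_empty_of_two_mul_lt (by omega), Set.ncard_empty]
      omega

theorem succ_mul_ncard_ballotPaths {m j : ℕ} (h : m ≤ 2 * j) :
    (j + 1) * (ballotPaths m j).ncard = (2 * j + 1 - m) * m.choose j := by
  have hballot := ncard_ballotPaths_add_choose h
  have hsucc := Nat.choose_succ_right_eq m j
  rcases le_or_gt j m with hjm | hmj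
  · have key :
        (j + 1) * (ballotPaths m j).ncard + (m - j) * m.choose j = (j + 1) * m.choose j := by
      rw [mul_comm (m - j), ← hsucc, ← hballot]
      ring
    rw [show 2 * j + 1 - m = (j + 1) - (m - j) by omega, Nat.sub_mul]
    omega
  · simp [ballotPaths_eq_empty_of_lt hmj, Nat.choose_eq_zero_of_lt hmj]

lemma isDyck_append_up_replicate_down_iff {n k : ℕ} (hk : k < 2 * n) (M : List Bool) :
    IsDyck n (M ++ true :: List.replicate k false) ↔
      M ∈ ballotPaths (2 * n - k - 1) (n - 1) := by
  change _ ∧ _ ∧ IsBallotSeq _ ↔ _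
  rw [← List.singleton_append, ← List.append_assoc, isBallotSeq_append_replicate_false_iff,
    isBallotSeq_concat_iff]
  simp only [ballotPaths, Set.mem_ofPred_eq, List.length_append, List.length_replicate,
    List.length_singleton, upCount_append, upCount_replicate_false, upCount_singleton,
    Bool.toNat_true]
  constructor
  · rintro ⟨hl, hu, ⟨hb, -⟩, -⟩
    exact ⟨by omega, by omega, hb⟩
  · rintro ⟨hl, hu, hb⟩
    exact ⟨by omega, by omega, ⟨hb, by omega⟩, by omega⟩

theorem stmt6 (n k : ℕ) (hk : 1 ≤ k) (hkn : k ≤ n) :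
    n * {L : List Bool | IsDyck n L ∧
        ∃ M, L = M ++ true :: List.replicate k false}.ncard =
      k * Nat.choose (2 * n - k - 1) (n - 1) := by
  have hset : {L : List Bool | IsDyck n L ∧ ∃ M, L = M ++ true :: List.replicate k false} =
      (· ++ true :: List.replicate k false) '' ballotPaths (2 * n - k - 1) (n - 1) := by
    ext L
    constructor
    · rintro ⟨hL, M, rfl⟩
      exact ⟨M, (isDyck_append_up_replicate_down_iff (by omega) M).1 hL, rfl⟩
    · rintro ⟨M, hM, rfl⟩
      exact ⟨(isDyck_append_up_replicate_down_iff (by omega) M).2 hM, M, rfl⟩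
  rw [hset, Set.ncard_image_of_injective _ (List.append_left_injective _)]
  have hballot := succ_mul_ncard_ballotPaths (m := 2 * n - k - 1) (j := n - 1) (by omega)
  rwa [Nat.sub_add_cancel (by omega), show 2 * (n - 1) + 1 - (2 * n - k - 1) = k by omega]
    at hballot
end

section
/- An inversion sequence e of length n avoids all three patterns 102, 201, and 101 if and only if e is unimodal with a unique-position peak in the following sense: there is an index p with e_1 ≤ e_2 ≤ ... ≤ e_p = max(e) > e_{p+1} ≥ e_{p+2} ≥ ... ≥ e_n. -/
/-!
Avoiding 102, 201 and 101 at once means avoiding every "valley" `e_i > e_j < e_k` with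
`i < j < k`, since the three patterns are the three possible orderings of `e_i` and `e_k`.
A valley-free sequence rises up to the last position `p` of its maximum: a descent before `p`
would be the left side of a valley closed by `e_p`. After `p` it falls weakly: an ascent there
would be the right side of a valley opened by `e_p`. Conversely a sequence rising to `p` and
falling after it has no valley, whichever side of `p` the middle index lies on.
-/

def PatValley (a b c : ℕ) : Prop := b < a ∧ b < c

theorem Contains.mono {n : ℕ} {P Q : ℕ → ℕ → ℕ → Prop} {e : ℕ → ℕ}
    (hPQ : ∀ a b c, P a b c → Q a b c) : Contains n P e → Contains n Q e := by
  rintro ⟨i, j, k, hi, hij, hjk, hkn, hP⟩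
  exact ⟨i, j, k, hi, hij, hjk, hkn, hPQ _ _ _ hP⟩

theorem contains_valley_iff (n : ℕ) (e : ℕ → ℕ) :
    Contains n PatValley e ↔
      Contains n Pat102 e ∨ Contains n Pat201 e ∨ Contains n Pat101 e := by
  constructor
  · rintro ⟨i, j, k, hi, hij, hjk, hkn, hji, hjk'⟩
    rcases lt_trichotomy (e i) (e k) with h | h | h
    · exact .inl ⟨i, j, k, hi, hij, hjk, hkn, hji, h⟩
    · exact .inr <| .inr ⟨i, j, k, hi, hij, hjk, hkn, h, hji⟩
    · exact .inr <| .inl ⟨i, j, k, hi, hij, hjk, hkn, hjk', h⟩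
  · rintro (h | h | h) <;> refine h.mono fun a b c ↦ ?_ <;>
      simp only [Pat102, Pat201, Pat101, PatValley] <;> omega

theorem monotoneOn_Icc_of_le_succ {α : Type*} [Preorder α] {f : ℕ → α} {a b : ℕ}
    (hf : ∀ i, a ≤ i → i < b → f i ≤ f (i + 1)) : MonotoneOn f (Set.Icc a b) :=
  monotoneOn_of_le_succ Set.ordConnected_Icc fun i _ hi hi' ↦ by
    simp only [Order.succ_eq_add_one, Set.mem_Icc] at hi hi' ⊢
    exact hf i hi.1 (by omega)

theorem antitoneOn_Icc_of_succ_le {α : Type*} [Preorder α] {f : ℕ → α} {a b : ℕ}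
    (hf : ∀ i, a ≤ i → i < b → f (i + 1) ≤ f i) : AntitoneOn f (Set.Icc a b) :=
  monotoneOn_Icc_of_le_succ (α := αᵒᵈ) hf

theorem not_contains_valley_of_monotoneOn_of_antitoneOn {n p : ℕ} {e : ℕ → ℕ}
    (hmono : MonotoneOn e (Set.Icc 1 p)) (hanti : AntitoneOn e (Set.Icc p n)) :
    ¬ Contains n PatValley e := by
  rintro ⟨i, j, k, hi, hij, hjk, hkn, hji, hjk'⟩
  rcases le_or_gt j p with hjp | hpj
  · exact (hmono ⟨hi, by omega⟩ ⟨by omega, hjp⟩ hij.le).not_gt hji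
  · exact (hanti ⟨hpj.le, by omega⟩ ⟨by omega, hkn⟩ hjk.le).not_gt hjk'

def IsLastArgmax {α : Type*} [Preorder α] (n : ℕ) (e : ℕ → α) (p : ℕ) : Prop :=
  1 ≤ p ∧ p ≤ n ∧ (∀ i, 1 ≤ i → i ≤ n → e i ≤ e p) ∧ ∀ i, p < i → i ≤ n → e i < e p

theorem exists_isLastArgmax {α : Type*} [LinearOrder α] {n : ℕ} (hn : 1 ≤ n) (e : ℕ → α) :
    ∃ p, IsLastArgmax n e p := by
  obtain ⟨a, ha, hmax⟩ := (Finset.Icc 1 n).exists_max_image e ⟨1, by simp [hn]⟩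
  simp only [Finset.mem_Icc] at ha hmax
  set p := Nat.findGreatest (fun i ↦ e a ≤ e i) n
  have hap : a ≤ p := Nat.le_findGreatest ha.2 le_rfl
  have hpn : p ≤ n := Nat.findGreatest_le n
  have hp : e p = e a :=
    le_antisymm (hmax p ⟨by omega, hpn⟩) (Nat.findGreatest_spec (P := fun i ↦ e a ≤ e i) ha.2 le_rfl)
  refine ⟨p, by omega, hpn, fun i hi hin ↦ hp ▸ hmax i ⟨hi, hin⟩, fun i hpi hin ↦ ?_⟩
  rw [hp]
  exact lt_of_not_ge (Nat.findGreatest_is_greatest hpi hin)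

theorem le_succ_of_isLastArgmax {n p : ℕ} {e : ℕ → ℕ} (hv : ¬ Contains n PatValley e)
    (hp : IsLastArgmax n e p) : ∀ i, 1 ≤ i → i < p → e i ≤ e (i + 1) := by
  obtain ⟨-, hpn, hmax, -⟩ := hp
  intro i hi hip
  by_contra! hdesc
  rcases (Nat.succ_le_of_lt hip).eq_or_lt with hsucc | hsucc
  · exact (hmax i hi (by omega)).not_gt (hsucc ▸ hdesc)
  · exact hv ⟨i, i + 1, p, hi, by omega, hsucc, hpn, hdesc,
      hdesc.trans_le (hmax i hi (by omega))⟩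

theorem succ_le_of_isLastArgmax {n p : ℕ} {e : ℕ → ℕ} (hv : ¬ Contains n PatValley e)
    (hp : IsLastArgmax n e p) : ∀ i, p < i → i < n → e (i + 1) ≤ e i := by
  obtain ⟨hp1, -, hmax, -⟩ := hp
  intro i hpi hin
  by_contra! hasc
  exact hv ⟨p, i, i + 1, hp1, hpi, by omega, by omega,
    hasc.trans_le (hmax (i + 1) (by omega) (by omega)), hasc⟩

theorem stmt13_general (n : ℕ) (hn : 1 ≤ n) (e : ℕ → ℕ) :
    (¬ Contains n Pat102 e ∧ ¬ Contains n Pat201 e ∧ ¬ Contains n Pat101 e) ↔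
      ∃ p, 1 ≤ p ∧ p ≤ n ∧ (∀ i, 1 ≤ i → i < p → e i ≤ e (i + 1)) ∧
        (∀ i, 1 ≤ i → i ≤ n → e i ≤ e p) ∧
        (p < n → e (p + 1) < e p) ∧
        (∀ i, p < i → i < n → e (i + 1) ≤ e i) := by
  simp only [← not_or, ← contains_valley_iff]
  constructor
  · intro hv
    obtain ⟨p, hp⟩ := exists_isLastArgmax hn e
    have ⟨hp1, hpn, hmax, hlast⟩ := hp
    exact ⟨p, hp1, hpn, le_succ_of_isLastArgmax hv hp, hmax,
      fun hpn' ↦ hlast (p + 1) (by omega) hpn', succ_le_of_isLastArgmax hv hp⟩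
  · rintro ⟨p, -, -, hinc, -, hpeak, hdec⟩
    refine not_contains_valley_of_monotoneOn_of_antitoneOn (monotoneOn_Icc_of_le_succ hinc)
      (antitoneOn_Icc_of_succ_le fun i hpi hin ↦ ?_)
    rcases hpi.eq_or_lt with rfl | hpi
    · exact (hpeak hin).le
    · exact hdec i hpi hin

theorem stmt13 (n : ℕ) (hn : 1 ≤ n) (e : ℕ → ℕ) (he : IsInvSeq n e) :
    (¬ Contains n Pat102 e ∧ ¬ Contains n Pat201 e ∧ ¬ Contains n Pat101 e) ↔
      ∃ p, 1 ≤ p ∧ p ≤ n ∧ (∀ i, 1 ≤ i → i < p → e i ≤ e (i + 1)) ∧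
        (∀ i, 1 ≤ i → i ≤ n → e i ≤ e p) ∧
        (p < n → e (p + 1) < e p) ∧
        (∀ i, p < i → i < n → e (i + 1) ≤ e i) :=
  stmt13_general n hn e
end

section
/- Let E(y) be the formal power series with E(0) = 0 satisfying E(y) = y/(1 - E(y))^2. Then for integers n ≥ 1 and t ≥ 0 with t+1 ≤ n, the coefficient of y^n in E(y)^{t+1} equals ((t+1)/n) · C(3n-t-2, n-t-1). -/
/-!
Multiplying `E (1 - E)^2 = y` by `E^(k-1)` gives `E^k - 2 E^(k+1) + E^(k+2) = y E^(k-1)`, a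
recurrence expressing `[y^n] E^k` through coefficients with a smaller value of `2n - k`.
Together with the boundary values (`[y^n] E^0 = 0` and `[y^n] E^k = 0` for `k > n ≥ 1`, since
`y ∣ E`), it determines all coefficients; the closed form `k/n · C(3n-k-1, 2n-1)` satisfies the
same recurrence by Pascal's rule.
-/

open PowerSeries

/-- Writing the binomial coefficient as `C(3n-k-1, 2n-1)` rather than `C(3n-k-1, n-k)` makes it
vanish for `k > n` without a case split. -/
noncomputable def powCoeff (k n : ℕ) : ℚ :=
  k / n * (3 * n - k - 1).choose (2 * n - 1)

theorem powCoeff_eq_zero_of_lt {k n : ℕ} (h : n < k) : powCoeff k n = 0 := by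
  rcases Nat.eq_zero_or_pos n with rfl | hn
  · simp [powCoeff]
  · simp [powCoeff, Nat.choose_eq_zero_of_lt (by omega : 3 * n - k - 1 < 2 * n - 1)]

theorem powCoeff_succ (a m : ℕ) (ha : a ≤ m + 1) :
    powCoeff (a + 1) (m + 2) =
      powCoeff a (m + 1) + 2 * powCoeff (a + 2) (m + 2) - powCoeff (a + 3) (m + 2) := by
  obtain ⟨d, hd⟩ : ∃ d, m + 1 = a + d := ⟨m + 1 - a, by omega⟩
  obtain ⟨r, hr⟩ : ∃ r, r = 2 * m + 1 := ⟨_, rfl⟩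
  simp only [powCoeff]
  rw [show 3 * (m + 1) - a - 1 = r + d by omega, show 2 * (m + 1) - 1 = r by omega,
    show 3 * (m + 2) - (a + 1) - 1 = r + d + 2 by omega, show 2 * (m + 2) - 1 = r + 2 by omega,
    show 3 * (m + 2) - (a + 2) - 1 = r + d + 1 by omega,
    show 3 * (m + 2) - (a + 3) - 1 = r + d by omega,
    Nat.choose_succ_succ (r + d + 1), Nat.choose_succ_succ (r + d),
    Nat.choose_succ_succ (r + d) (r + 1), Nat.succ_eq_add_one]
  have hrel := Nat.choose_succ_right_eq (r + d) r
  rw [Nat.add_sub_cancel_left] at hrel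
  have hrel' : ((r + d).choose (r + 1) : ℚ) * (2 * m + 2) = (r + d).choose r * d := by
    rw [hr] at hrel ⊢
    exact_mod_cast hrel
  have hd' : (m + 1 : ℚ) = a + d := by exact_mod_cast hd
  push_cast
  field_simp
  linear_combination ((r + d).choose r : ℚ) * hd' - hrel'

section

variable {R : Type*} [CommRing R] {E : R⟦X⟧}

theorem coeff_pow_eq_zero_of_lt (hX : X ∣ E) {k n : ℕ} (h : n < k) : coeff n (E ^ k) = 0 :=
  X_pow_dvd_iff.mp (pow_dvd_pow_of_dvd hX k) n h

theorem coeff_succ_pow_succ (hE : E * (1 - E) ^ 2 = X) (a p : ℕ) :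
    coeff (p + 1) (E ^ (a + 1)) =
      coeff p (E ^ a) + 2 * coeff (p + 1) (E ^ (a + 2)) - coeff (p + 1) (E ^ (a + 3)) := by
  have h : E ^ (a + 1) - 2 * E ^ (a + 2) + E ^ (a + 3) = X * E ^ a := by
    rw [← hE]; ring
  have hcoeff := congrArg (coeff (p + 1)) h
  rw [coeff_succ_X_mul, map_add, map_sub, ← map_ofNat C, coeff_C_mul] at hcoeff
  rw [← hcoeff]; ring

end

theorem coeff_pow_eq_powCoeff {E : ℚ⟦X⟧} (hX : X ∣ E) (hE : E * (1 - E) ^ 2 = X)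
    (k n : ℕ) (hn : 1 ≤ n) : coeff n (E ^ k) = powCoeff k n := by
  rcases Nat.lt_or_ge n k with hlt | hle
  · rw [coeff_pow_eq_zero_of_lt hX hlt, powCoeff_eq_zero_of_lt hlt]
  rcases k.eq_zero_or_pos with rfl | hk
  · simp [powCoeff, coeff_one, Nat.one_le_iff_ne_zero.mp hn]
  obtain ⟨a, rfl⟩ : ∃ a, k = a + 1 := ⟨k - 1, by omega⟩
  obtain ⟨p, rfl⟩ : ∃ p, n = p + 1 := ⟨n - 1, by omega⟩
  rw [coeff_succ_pow_succ hE]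
  rcases p.eq_zero_or_pos with rfl | hp
  · obtain rfl : a = 0 := by omega
    simp [coeff_pow_eq_zero_of_lt hX, powCoeff]
  · obtain ⟨m, rfl⟩ : ∃ m, p = m + 1 := ⟨p - 1, by omega⟩
    rw [coeff_pow_eq_powCoeff hX hE a (m + 1) (by omega),
      coeff_pow_eq_powCoeff hX hE (a + 2) (m + 2) (by omega),
      coeff_pow_eq_powCoeff hX hE (a + 3) (m + 2) (by omega), powCoeff_succ a m (by omega)]
termination_by 2 * n - k

theorem mul_one_sub_sq_eq_X {K : Type*} [Field K] {E : K⟦X⟧} (hE : E = X * ((1 - E)⁻¹) ^ 2) :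
    E * (1 - E) ^ 2 = X := by
  have hunit : constantCoeff (1 - E) ≠ 0 := by
    rw [map_sub, hE]; simp
  calc E * (1 - E) ^ 2 = X * ((1 - E)⁻¹) ^ 2 * (1 - E) ^ 2 := by rw [← hE]
    _ = X * ((1 - E) * (1 - E)⁻¹) ^ 2 := by ring
    _ = X := by rw [PowerSeries.mul_inv_cancel _ hunit, one_pow, mul_one]

theorem stmt16_general (E : PowerSeries ℚ)
    (hE : E = PowerSeries.X * ((1 - E)⁻¹) ^ 2)
    (n t : ℕ) (ht : t + 1 ≤ n) :
    PowerSeries.coeff n (E ^ (t + 1)) =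
      ((t + 1 : ℚ) / (n : ℚ)) * (Nat.choose (3 * n - t - 2) (n - t - 1) : ℚ) := by
  rw [coeff_pow_eq_powCoeff ⟨_, hE⟩ (mul_one_sub_sq_eq_X hE) (t + 1) n (by omega), powCoeff,
    Nat.choose_symm_of_eq_add (by omega : 3 * n - t - 2 = n - t - 1 + (2 * n - 1)),
    show 3 * n - (t + 1) - 1 = 3 * n - t - 2 by omega]
  push_cast
  rfl

theorem stmt16 (E : PowerSeries ℚ) (h0 : constantCoeff E = 0)
    (hE : E = PowerSeries.X * ((1 - E)⁻¹) ^ 2)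
    (n t : ℕ) (hn : 1 ≤ n) (ht : t + 1 ≤ n) :
    PowerSeries.coeff n (E ^ (t + 1)) =
      ((t + 1 : ℚ) / (n : ℚ)) * (Nat.choose (3 * n - t - 2) (n - t - 1) : ℚ) :=
  stmt16_general E hE n t ht
end

section
/- Let D(x) be the formal power series with D(0) = 0 satisfying D = x(1+D)^2 + x^2(1+D)^3 D / (1 - x(1+D)^2). Then D satisfies the polynomial equation D = (x - x^2)(1+D)^3. -/
open PowerSeries

theorem stmt17_general (D : PowerSeries ℚ)
    (hD : D = PowerSeries.X * (1 + D) ^ 2 +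
      PowerSeries.X ^ 2 * (1 + D) ^ 3 * D * (1 - PowerSeries.X * (1 + D) ^ 2)⁻¹) :
    D = (PowerSeries.X - PowerSeries.X ^ 2) * (1 + D) ^ 3 := by
  have hinv : (1 - X * (1 + D) ^ 2)⁻¹ * (1 - X * (1 + D) ^ 2) = 1 :=
    PowerSeries.inv_mul_cancel _ (by simp)
  -- Clearing the denominator, the terms in `X ^ 2 * (1 + D) ^ 3 * D` cancel.
  linear_combination (1 - X * (1 + D) ^ 2) * hD + X ^ 2 * (1 + D) ^ 3 * D * hinv

theorem stmt17 (D : PowerSeries ℚ) (h0 : constantCoeff D = 0)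
    (hD : D = PowerSeries.X * (1 + D) ^ 2 +
      PowerSeries.X ^ 2 * (1 + D) ^ 3 * D * (1 - PowerSeries.X * (1 + D) ^ 2)⁻¹) :
    D = (PowerSeries.X - PowerSeries.X ^ 2) * (1 + D) ^ 3 :=
  stmt17_general D hD
end
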